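/- arXiv:cond-mat/0111293 — 8 statements merged into one kernel-verified Lean document; each statement's English description precedes it below -/
import Mathlib

section
/- For the zero-temperature majority dynamics on the hexagonal lattice (a spin flips if and only if it disagrees with the strict majority of its three neighbors), a site whose spin agrees with all sites of a fixed simple cycle of constant sign containing it never flips at any later time: the constant-sign cycle is stable under the dynamics. -/
open MeasureTheory

/-- Vertices of the hexagonal (honeycomb) lattice: two sites per unit cell of `ℤ × ℤ`. -/
abbrev Hex := ℤ × ℤ × Bool

/-- Base adjacency relation generating the hexagonal lattice: the `A`-site (`false`) of cell
`(i,j)` is adjacent to the `B`-sites (`true`) of cells `(i,j)`, `(i-1,j)`, `(i,j-1)`. -/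
def hexRel (u v : Hex) : Prop :=
  u.2.2 = false ∧ v.2.2 = true ∧
    ((v.1, v.2.1) = (u.1, u.2.1) ∨ (v.1, v.2.1) = (u.1 - 1, u.2.1) ∨
      (v.1, v.2.1) = (u.1, u.2.1 - 1))

/-- The hexagonal lattice as a simple graph; every vertex has degree 3. -/
def HexGraph : SimpleGraph Hex := SimpleGraph.fromRel hexRel

/-- Membership in the sublattice `A`. -/
def isA (v : Hex) : Prop := v.2.2 = false

/-- Membership in the sublattice `B`. -/
def isB (v : Hex) : Prop := v.2.2 = true

/-- Adjacency of two `B`-sites (graph distance 2 in `H`, via a common `A`-neighbor);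
this makes `B` a triangular lattice. -/
def Badj (y y' : Hex) : Prop :=
  isB y ∧ isB y' ∧ y ≠ y' ∧ ∃ z, isA z ∧ HexGraph.Adj y z ∧ HexGraph.Adj z y'

/-- The triangular lattice as a graph on `ℤ × ℤ` (each vertex has 6 neighbors). -/
def triRel (u v : ℤ × ℤ) : Prop :=
  (v.1 - u.1, v.2 - u.2) ∈ ({(1, 0), (0, 1), (1, -1)} : Set (ℤ × ℤ))

def TriGraph : SimpleGraph (ℤ × ℤ) := SimpleGraph.fromRel triRel

/-- The three `H`-neighbors of a hexagonal-lattice site. -/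
def nbrsT : Hex → Hex × Hex × Hex
  | (i, j, true) => ((i, j, false), (i + 1, j, false), (i, j + 1, false))
  | (i, j, false) => ((i, j, true), (i - 1, j, true), (i, j - 1, true))

/-- The majority of the spins of the three neighbors of `x`; a spin flips iff it disagrees
with at least two of its three neighbors, i.e. the updated value is this majority. -/
def majAt (σ : Hex → Bool) (x : Hex) : Bool :=
  let n := nbrsT x
  (σ n.1 && σ n.2.1) || (σ n.1 && σ n.2.2) || (σ n.2.1 && σ n.2.2)

/-- Update of the sublattice `A`. -/
def updA (σ : Hex → Bool) : Hex → Bool := fun x =>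
  if x.2.2 = false then majAt σ x else σ x

/-- Update of the sublattice `B`. -/
def updB (σ : Hex → Bool) : Hex → Bool := fun x =>
  if x.2.2 = true then majAt σ x else σ x

/-- The zero-temperature alternating-sublattice majority dynamics: `A` is updated at odd
times, `B` at even times. -/
def evolve (σ0 : Hex → Bool) : ℕ → Hex → Bool
  | 0 => σ0
  | n + 1 => if (n + 1) % 2 = 1 then updA (evolve σ0 n) else updB (evolve σ0 n)

/-- `z` is the common `A`-neighbor linking the (B-adjacent) pair `p`. -/
def IsLink (p : Hex × Hex) (z : Hex) : Prop :=
  isA z ∧ HexGraph.Adj p.1 z ∧ HexGraph.Adj z p.2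

/-- A (site-self-avoiding) path in the triangular sublattice `B`. -/
def IsPathB (l : List Hex) : Prop :=
  (∀ y ∈ l, isB y) ∧ l.Chain' Badj ∧ l.Nodup

/-- An s-path: a path in `B` whose consecutive-pair common `A`-neighbors are all distinct. -/
def IsSPath (l : List Hex) : Prop :=
  IsPathB l ∧ ∃ zs : List Hex, List.Forall₂ IsLink (l.zip l.tail) zs ∧ zs.Nodup

/-- A simple loop in the triangular sublattice `B`, recorded by its (distinct) sites. -/
def IsLoopB (l : List Hex) : Prop :=
  (∀ y ∈ l, isB y) ∧ l.Nodup ∧ 3 ≤ l.length ∧ (l ++ l.take 1).Chain' Badj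

/-- An s-loop: a loop in `B` whose consecutive-pair common `A`-neighbors are all distinct. -/
def IsSLoop (l : List Hex) : Prop :=
  IsLoopB l ∧ ∃ zs : List Hex,
    List.Forall₂ IsLink ((l ++ l.take 1).zip (l ++ l.take 1).tail) zs ∧ zs.Nodup

/-- A star: a triangle in `B` whose three sites have a common `A`-neighbor. -/
def IsStar (a b c : Hex) : Prop :=
  Badj a b ∧ Badj b c ∧ Badj c a ∧
    ∃ z, isA z ∧ HexGraph.Adj a z ∧ HexGraph.Adj b z ∧ HexGraph.Adj c z

/-- An antistar: a triangle in `B` whose three sites have no common `A`-neighbor. -/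
def IsAntistarSet (t : Finset Hex) : Prop :=
  ∃ a b c : Hex, t = {a, b, c} ∧ Badj a b ∧ Badj b c ∧ Badj c a ∧
    ¬ ∃ z, isA z ∧ HexGraph.Adj a z ∧ HexGraph.Adj b z ∧ HexGraph.Adj c z

/-- The partial cluster `C_{(x,x')}`: sites of `B` reachable from `x'` by a self-avoiding
path of constant `σ`-sign whose first step avoids `x` and does not form a star with `x`. -/
def partialCluster (σ : Hex → Bool) (x x' : Hex) : Set Hex :=
  {y | ∃ l : List Hex, IsPathB l ∧ (∀ w ∈ l, σ w = σ x') ∧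
        l.head? = some x' ∧ l.getLast? = some y ∧
        ∀ h : 1 < l.length, l.get ⟨1, h⟩ ≠ x ∧ ¬ IsStar x' (l.get ⟨1, h⟩) x}

/-- The open cluster of `x0` (for `σ`-open sites) in the triangular sublattice `B`. -/
def openCluster (σ : Hex → Bool) (x0 : Hex) : Set Hex :=
  {y | ∃ l : List Hex, IsPathB l ∧ (∀ w ∈ l, σ w = true) ∧
        l.head? = some x0 ∧ l.getLast? = some y}

/-- A barbell: two vertex-disjoint simple cycles connected by a path (a single simple cycle
being a degenerate barbell), recorded as its set of sites. -/
def IsBarbell (S : Set Hex) : Prop :=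
  (∃ (u : Hex) (c : HexGraph.Walk u u), c.IsCycle ∧ S = {x | x ∈ c.support}) ∨
  (∃ (u v w1 w2 : Hex) (c1 : HexGraph.Walk u u) (c2 : HexGraph.Walk v v)
      (p : HexGraph.Walk w1 w2), c1.IsCycle ∧ c2.IsCycle ∧
      Disjoint {x | x ∈ c1.support} {x | x ∈ c2.support} ∧ p.IsPath ∧
      w1 ∈ c1.support ∧ w2 ∈ c2.support ∧
      S = {x | x ∈ c1.support} ∪ {x | x ∈ c2.support} ∪ {x | x ∈ p.support})

/-- Standard planar embedding of the triangular lattice (unit mesh). -/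
noncomputable def embT (p : ℤ × ℤ) : ℝ × ℝ :=
  ((p.1 : ℝ) + (p.2 : ℝ) / 2, (p.2 : ℝ) * Real.sqrt 3 / 2)

/-- Planar embedding of the hexagonal lattice: `B`-sites at triangular-lattice points,
`A`-sites at the centroids of their three `B`-neighbors. -/
noncomputable def embH (v : Hex) : ℝ × ℝ :=
  if v.2.2 then embT (v.1, v.2.1)
  else (((embT (v.1, v.2.1)).1 + (embT (v.1 - 1, v.2.1)).1 + (embT (v.1, v.2.1 - 1)).1) / 3,
        ((embT (v.1, v.2.1)).2 + (embT (v.1 - 1, v.2.1)).2 + (embT (v.1, v.2.1 - 1)).2) / 3)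

/-- The open rectangle `(-a/2, a/2) × (-b/2, b/2)`. -/
def rectR (a b : ℝ) : Set (ℝ × ℝ) := Set.Ioo (-a / 2) (a / 2) ×ˢ Set.Ioo (-b / 2) (b / 2)

def topSide (a b : ℝ) : Set (ℝ × ℝ) := Set.Icc (-a / 2) (a / 2) ×ˢ ({b / 2} : Set ℝ)
def bottomSide (a b : ℝ) : Set (ℝ × ℝ) := Set.Icc (-a / 2) (a / 2) ×ˢ ({-b / 2} : Set ℝ)
def leftSide (a b : ℝ) : Set (ℝ × ℝ) := ({-a / 2} : Set ℝ) ×ˢ Set.Icc (-b / 2) (b / 2)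
def rightSide (a b : ℝ) : Set (ℝ × ℝ) := ({a / 2} : Set ℝ) ×ˢ Set.Icc (-b / 2) (b / 2)

/-- A lattice crossing of a region, following the paper: a path `x_0, …, x_{m+1}` of good
sites, with `δ x_1, …, δ x_m` inside the region, the segment from `δ x_0` to `δ x_1`
touching the starting side and the segment from `δ x_m` to `δ x_{m+1}` touching the
ending side. -/
def LatticeCrossing {α : Type*} (Adj : α → α → Prop) (good : α → Prop) (e : α → ℝ × ℝ)
    (δ : ℝ) (inside startSide endSide : Set (ℝ × ℝ)) : Prop :=
  ∃ (m : ℕ) (f : ℕ → α), 1 ≤ m ∧ (∀ i ≤ m, Adj (f i) (f (i + 1))) ∧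
    (∀ i ≤ m + 1, good (f i)) ∧
    (∀ i, 1 ≤ i → i ≤ m → δ • e (f i) ∈ inside) ∧
    (segment ℝ (δ • e (f 0)) (δ • e (f 1)) ∩ startSide).Nonempty ∧
    (segment ℝ (δ • e (f m)) (δ • e (f (m + 1))) ∩ endSide).Nonempty

/-- Vertical plus-crossing of the rectangle `R(a,b)` in the mesh-`δ` hexagonal lattice. -/
def VPlusCrossHex (σ : Hex → Bool) (δ a b : ℝ) : Prop :=
  LatticeCrossing HexGraph.Adj (fun v => σ v = true) embH δ (rectR a b) (topSide a b)
    (bottomSide a b)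

/-- Horizontal minus-crossing of `R(a,b)` in the mesh-`δ` hexagonal lattice. -/
def HMinusCrossHex (σ : Hex → Bool) (δ a b : ℝ) : Prop :=
  LatticeCrossing HexGraph.Adj (fun v => σ v = false) embH δ (rectR a b) (leftSide a b)
    (rightSide a b)

/-- Horizontal minus-crossing of `R(a,b)` in the mesh-`δ` triangular sublattice `B`. -/
def HMinusCrossB (σ : Hex → Bool) (δ a b : ℝ) : Prop :=
  LatticeCrossing Badj (fun v => σ v = false) embH δ (rectR a b) (leftSide a b)
    (rightSide a b)

/-- Vertical plus-crossing of `R(a,b)` in the mesh-`δ` sublattice `B` realized by an s-path. -/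
def SPathVPlusCrossB (σ : Hex → Bool) (δ a b : ℝ) : Prop :=
  ∃ (m : ℕ) (f : ℕ → Hex), 1 ≤ m ∧
    IsSPath (List.ofFn fun i : Fin (m + 2) => f i) ∧
    (∀ i ≤ m + 1, σ (f i) = true) ∧
    (∀ i, 1 ≤ i → i ≤ m → δ • embH (f i) ∈ rectR a b) ∧
    (segment ℝ (δ • embH (f 0)) (δ • embH (f 1)) ∩ topSide a b).Nonempty ∧
    (segment ℝ (δ • embH (f m)) (δ • embH (f (m + 1))) ∩ bottomSide a b).Nonempty

/-- The six triangular-lattice neighbors of a site. -/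
def triNbrs (p : ℤ × ℤ) : List (ℤ × ℤ) :=
  [(p.1 + 1, p.2), (p.1 - 1, p.2), (p.1, p.2 + 1), (p.1, p.2 - 1),
    (p.1 + 1, p.2 - 1), (p.1 - 1, p.2 + 1)]

/-- One step of the deterministic cellular automaton on the triangular lattice: the spin
at `p` flips iff at least two of its three designated neighbor-pairs are monochromatic
of the opposite sign. -/
def autoStep (τ : ℤ × ℤ → Bool) (p : ℤ × ℤ) : Bool :=
  let v := τ p
  let q1 := (τ (p.1 - 1, p.2) == !v) && (τ (p.1, p.2 - 1) == !v)
  let q2 := (τ (p.1 + 1, p.2) == !v) && (τ (p.1 + 1, p.2 - 1) == !v)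
  let q3 := (τ (p.1 - 1, p.2 + 1) == !v) && (τ (p.1, p.2 + 1) == !v)
  cond ((q1 && q2) || (q1 && q3) || (q2 && q3)) (!v) v

/-- The automaton dynamics on the triangular lattice. -/
def autoEvolve (τ0 : ℤ × ℤ → Bool) : ℕ → ℤ × ℤ → Bool
  | 0 => τ0
  | m + 1 => autoStep (autoEvolve τ0 m)

/-- The Gauss hypergeometric function `₂F₁`, as a power series. -/
noncomputable def hyp2F1 (a b c x : ℝ) : ℝ :=
  ∑' n : ℕ, ((ascPochhammer ℝ n).eval a * (ascPochhammer ℝ n).eval b /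
    (ascPochhammer ℝ n).eval c) * x ^ n / (n.factorial : ℝ)

/-- Cardy's formula `F_C(η)`. -/
noncomputable def cardyF (η : ℝ) : ℝ :=
  (Real.Gamma (2 / 3) / (Real.Gamma (4 / 3) * Real.Gamma (1 / 3))) * η ^ ((1 : ℝ) / 3) *
    hyp2F1 (1 / 3) (2 / 3) (4 / 3) η

/-!
Every site of a simple cycle has two distinct neighbours on the cycle. In the hexagonal
lattice a site has only three neighbours, so two of them already form the majority: a site of
a constant-sign cycle agrees with its majority and is not flipped by either sublattice update.
Induction on time then keeps the whole cycle at its sign.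
-/

theorem SimpleGraph.Walk.IsCycle.exists_adj_ne_of_mem_support {V : Type*} {G : SimpleGraph V}
    {u x : V} {c : G.Walk u u} (hc : c.IsCycle) (hx : x ∈ c.support) :
    ∃ y z, y ≠ z ∧ G.Adj x y ∧ G.Adj x z ∧ y ∈ c.support ∧ z ∈ c.support := by
  classical
  have hc' := hc.rotate hx
  set c' := c.rotate x hx
  refine ⟨c'.snd, c'.penultimate, hc'.snd_ne_penultimate, c'.adj_snd hc'.not_nil,
    (c'.adj_penultimate hc'.not_nil).symm, ?_, ?_⟩
  · exact (c.mem_support_rotate_iff x hx).mp (c'.getVert_mem_support 1)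
  · exact (c.mem_support_rotate_iff x hx).mp (c'.getVert_mem_support _)

theorem eq_nbrsT_of_adj {x y : Hex} (h : HexGraph.Adj x y) :
    y = (nbrsT x).1 ∨ y = (nbrsT x).2.1 ∨ y = (nbrsT x).2.2 := by
  obtain ⟨i, j, b⟩ := x
  obtain ⟨k, l, c⟩ := y
  obtain ⟨-, h | h⟩ := h <;>
    obtain ⟨h1, h2, h3 | h3 | h3⟩ := h <;>
    cases b <;> cases c <;> simp_all [nbrsT, Prod.ext_iff]

theorem majAt_eq_of_adj_of_adj {σ : Hex → Bool} {x y z : Hex} {s : Bool} (hyz : y ≠ z)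
    (hxy : HexGraph.Adj x y) (hxz : HexGraph.Adj x z) (hy : σ y = s) (hz : σ z = s) :
    majAt σ x = s := by
  unfold majAt
  rcases eq_nbrsT_of_adj hxy with rfl | rfl | rfl <;>
    rcases eq_nbrsT_of_adj hxz with rfl | rfl | rfl <;>
    first
      | exact absurd rfl hyz
      | (cases s <;> simp_all)

theorem evolve_succ_apply_eq_of_majAt_eq {σ0 : Hex → Bool} {n : ℕ} {x : Hex} {s : Bool}
    (hx : evolve σ0 n x = s) (hmaj : majAt (evolve σ0 n) x = s) :
    evolve σ0 (n + 1) x = s := by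
  rw [evolve]
  split_ifs <;> simp only [updA, updB] <;> split_ifs <;> assumption

/-- a simple cycle of constant sign in the hexagonal lattice is stable:
every site on it keeps its sign at all later times of the dynamics. -/
theorem cycle_stable (σ0 : Hex → Bool) (u : Hex) (c : HexGraph.Walk u u)
    (hc : c.IsCycle) (s : Bool) (n0 : ℕ)
    (hconst : ∀ x ∈ c.support, evolve σ0 n0 x = s) :
    ∀ n, n0 ≤ n → ∀ x ∈ c.support, evolve σ0 n x = s := by
  intro n hn
  induction n, hn using Nat.le_induction with
  | base => exact hconst
  | succ n _ ih =>
    intro x hx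
    obtain ⟨y, z, hyz, hxy, hxz, hy, hz⟩ := hc.exists_adj_ne_of_mem_support hx
    exact evolve_succ_apply_eq_of_majAt_eq (ih x hx)
      (majAt_eq_of_adj_of_adj hyz hxy hxz (ih y hy) (ih z hz))
end

section
/- Any path in the triangular sublattice B between sites y and y' contains (as a subset of its sites) an s-path between y and y'. -/
open MeasureTheory

/-! Among the sub-paths of a path with the same end points, a shortest one has no chord (no two
non-consecutive sites adjacent in `B`), since a chord would shortcut it. A chordless path is an
s-path: if `ζᵢ = ζⱼ` with `i < j`, then `yᵢ` and `yⱼ₊₁` are both `H`-neighbours of this `A`-site,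
hence adjacent in `B`. -/

namespace List

variable {α : Type*}

theorem take_append_drop_sublist (l : List α) {k j : ℕ} (h : k ≤ j) :
    l.take k ++ l.drop j <+ l := by
  simpa using (drop_sublist_drop_left (l := l) h).append_left (l.take k)

theorem head?_take_append_drop (l : List α) {k : ℕ} (hk : 0 < k) (j : ℕ) :
    (l.take k ++ l.drop j).head? = l.head? := by
  cases l <;> cases k <;> simp_all

theorem getLast?_take_append_drop (l : List α) (k : ℕ) {j : ℕ} (hj : j < l.length) :
    (l.take k ++ l.drop j).getLast? = l.getLast? := by
  obtain ⟨x, hx⟩ := Option.isSome_iff_exists.mp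
    (getLast?_isSome.mpr (ne_nil_of_length_pos (by omega : 0 < l.length)))
  rw [getLast?_append, getLast?_drop, if_neg (by omega), hx]
  rfl

variable {R : α → α → Prop}

theorem IsChain.take_append_drop {l : List α} (hl : l.IsChain R) {i j : ℕ}
    (hi : i < l.length) (hj : j < l.length) (hR : R l[i] l[j]) :
    (l.take (i + 1) ++ l.drop j).IsChain R := by
  refine (hl.take _).append (hl.drop _) ?_
  simp [getLast?_take, head?_drop, getElem?_eq_getElem hi, getElem?_eq_getElem hj, hR]

def IsChordless (R : α → α → Prop) (l : List α) : Prop :=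
  ∀ (i j : ℕ) (hi : i < l.length) (hj : j < l.length), i + 1 < j → ¬ R l[i] l[j]

theorem IsChain.exists_sublist_isChordless {l : List α} (hl : l.IsChain R) :
    ∃ l', l' <+ l ∧ l'.IsChain R ∧ l'.IsChordless R ∧
      l'.head? = l.head? ∧ l'.getLast? = l.getLast? := by
  induction hn : l.length using Nat.strong_induction_on generalizing l with
  | _ n ih =>
  by_cases hc : l.IsChordless R
  · exact ⟨l, Sublist.refl l, hl, hc, rfl, rfl⟩
  simp only [IsChordless, not_forall, not_not] at hc
  obtain ⟨i, j, hi, hj, hij, hR⟩ := hc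
  obtain ⟨l', hsub, hchain, hchord, hhead, hlast⟩ :=
    ih _ (by simp only [length_append, length_take, length_drop]; omega) (hl.take_append_drop hi hj hR) rfl
  refine ⟨l', hsub.trans (l.take_append_drop_sublist (by omega)), hchain, hchord, ?_, ?_⟩
  · rw [hhead, head?_take_append_drop _ i.succ_pos]
  · rw [hlast, getLast?_take_append_drop _ _ hj]

end List

noncomputable def linkOf (p : Hex × Hex) : Hex := Classical.epsilon (IsLink p)

theorem isLink_linkOf {y y' : Hex} (h : Badj y y') : IsLink (y, y') (linkOf (y, y')) :=
  Classical.epsilon_spec h.2.2.2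

/-- The sites `ζ₁, …, ζₙ` of a path `y₀, …, yₙ` in `B`. -/
noncomputable def links (l : List Hex) : List Hex := (l.zip l.tail).map linkOf

theorem length_links (l : List Hex) : (links l).length = l.length - 1 := by
  simp [links]

theorem isLink_getElem_links {l : List Hex} (hl : l.IsChain Badj) (k : ℕ)
    (hk : k < (links l).length) :
    IsLink (l[k]'(by rw [length_links] at hk; omega),
      l[k + 1]'(by rw [length_links] at hk; omega)) (links l)[k] := by
  rw [length_links] at hk
  simpa [links] using isLink_linkOf (hl.getElem k (by omega))

theorem forall₂_isLink_links {l : List Hex} (hl : l.IsChain Badj) :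
    List.Forall₂ IsLink (l.zip l.tail) (links l) := by
  refine List.forall₂_iff_get.mpr ⟨by simp [links], fun k _ hk => ?_⟩
  simpa using isLink_getElem_links hl k hk

theorem Badj.of_isLink {a b c d z : Hex} (ha : isB a) (hd : isB d) (had : a ≠ d)
    (hab : IsLink (a, b) z) (hcd : IsLink (c, d) z) : Badj a d :=
  ⟨ha, hd, had, z, hab.1, hab.2.1, hcd.2.2⟩

theorem IsPathB.isSPath_of_isChordless {l : List Hex} (hl : IsPathB l)
    (hc : l.IsChordless Badj) : IsSPath l := by
  obtain ⟨hB, hchain, hnodup⟩ := hl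
  refine ⟨⟨hB, hchain, hnodup⟩, links l, forall₂_isLink_links hchain, ?_⟩
  refine List.pairwise_iff_getElem.mpr fun i j hi hj hij heq => ?_
  have hlen := length_links l
  have hi' := isLink_getElem_links hchain i hi
  have hj' := isLink_getElem_links hchain j hj
  rw [heq] at hi'
  refine hc i (j + 1) (by omega) (by omega) (by omega)
    (Badj.of_isLink (hB _ (List.getElem_mem _)) (hB _ (List.getElem_mem _)) ?_ hi' hj')
  rw [Ne, hnodup.getElem_inj_iff]
  omega

theorem path_contains_spath_general (l : List Hex) (hl : IsPathB l) :
    ∃ l' : List Hex, IsSPath l' ∧ l'.head? = l.head? ∧ l'.getLast? = l.getLast? ∧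
      ∀ x ∈ l', x ∈ l := by
  obtain ⟨l', hsub, hchain, hchord, hhead, hlast⟩ := hl.2.1.exists_sublist_isChordless
  have hpath : IsPathB l' :=
    ⟨fun y hy => hl.1 y (hsub.subset hy), hchain, hsub.nodup hl.2.2⟩
  exact ⟨l', hpath.isSPath_of_isChordless hchord, hhead, hlast, fun x hx => hsub.subset hx⟩

/-- any path in `B` between `y` and `y'` contains (as a subset of its sites)
an s-path between `y` and `y'`. -/
theorem path_contains_spath (l : List Hex) (hl : IsPathB l) (hne : l ≠ []) :
    ∃ l' : List Hex, IsSPath l' ∧ l'.head? = l.head? ∧ l'.getLast? = l.getLast? ∧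
      ∀ x ∈ l', x ∈ l :=
  path_contains_spath_general l hl
end

section
/- Any simple cycle in the triangular sublattice B containing more than three sites contains an s-loop (i.e., a subcycle whose consecutive-pair common A-neighbors are all distinct). -/
open MeasureTheory

/-!
If two edges of a simple loop in `B` have the same link `z`, their four endpoints are
`H`-neighbours of `z`, which has only three; so the edges share a site and, the loop being
simple, they are consecutive: three consecutive sites `a, b, c` of the loop are neighbours of
`z`. Then `a` and `c` are `B`-adjacent through `z`, and deleting `b` leaves a shorter loop
through the remaining sites. Induct on the length, keeping the invariant that the sites of the
loop have no common `A`-neighbour (automatic beyond three sites): it guarantees that the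
shortened loop still has three sites, and it survives the deletion because `z` is the only
common neighbour of `a` and `c`. A loop whose links are all distinct is an s-loop.
-/

namespace HexGraph

lemma adj_iff_of_isB {y z : Hex} (hy : isB y) :
    HexGraph.Adj y z ↔ isA z ∧
      (z.1 = y.1 ∧ z.2.1 = y.2.1 ∨ z.1 = y.1 + 1 ∧ z.2.1 = y.2.1 ∨
        z.1 = y.1 ∧ z.2.1 = y.2.1 + 1) := by
  unfold isB at hy
  simp only [HexGraph, SimpleGraph.fromRel_adj, hexRel, isA, Prod.mk.injEq, ne_eq]
  constructor
  · rintro ⟨-, ⟨h, -⟩ | ⟨hz, -, hc⟩⟩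
    · simp [h] at hy
    · exact ⟨hz, by omega⟩
  · rintro ⟨hz, hc⟩
    exact ⟨by rintro rfl; simp [hz] at hy, Or.inr ⟨hz, hy, by omega⟩⟩

lemma isA_of_adj {y z : Hex} (hy : isB y) (h : HexGraph.Adj y z) : isA z :=
  ((adj_iff_of_isB hy).1 h).1

lemma eq_of_adj_of_adj {a b z z' : Hex} (ha : isB a) (hb : isB b) (hab : a ≠ b)
    (haz : HexGraph.Adj a z) (hbz : HexGraph.Adj b z)
    (haz' : HexGraph.Adj a z') (hbz' : HexGraph.Adj b z') : z = z' := by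
  rw [adj_iff_of_isB ha] at haz haz'
  rw [adj_iff_of_isB hb] at hbz hbz'
  obtain ⟨a1, a2, a3⟩ := a; obtain ⟨b1, b2, b3⟩ := b
  obtain ⟨z1, z2, z3⟩ := z; obtain ⟨w1, w2, w3⟩ := z'
  obtain ⟨rfl, haz⟩ := haz; obtain ⟨rfl, haz'⟩ := haz'
  obtain ⟨-, hbz⟩ := hbz; obtain ⟨-, hbz'⟩ := hbz'
  simp only [isB] at ha hb
  subst ha hb
  simp only [ne_eq, Prod.mk.injEq, and_true] at *
  omega

lemma eq_or_eq_or_eq_of_adj {a b c d z : Hex} (ha : isB a) (hb : isB b) (hc : isB c)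
    (hd : isB d) (haz : HexGraph.Adj a z) (hbz : HexGraph.Adj b z) (hcz : HexGraph.Adj c z)
    (hdz : HexGraph.Adj d z) (hab : a ≠ b) (hac : a ≠ c) (hbc : b ≠ c) :
    d = a ∨ d = b ∨ d = c := by
  rw [adj_iff_of_isB ha] at haz; rw [adj_iff_of_isB hb] at hbz
  rw [adj_iff_of_isB hc] at hcz; rw [adj_iff_of_isB hd] at hdz
  obtain ⟨a1, a2, a3⟩ := a; obtain ⟨b1, b2, b3⟩ := b
  obtain ⟨c1, c2, c3⟩ := c; obtain ⟨d1, d2, d3⟩ := d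
  obtain ⟨-, haz⟩ := haz; obtain ⟨-, hbz⟩ := hbz
  obtain ⟨-, hcz⟩ := hcz; obtain ⟨-, hdz⟩ := hdz
  simp only [isB] at ha hb hc hd
  subst ha hb hc hd
  simp only [ne_eq, Prod.mk.injEq, and_true] at *
  rcases haz with ⟨_, _⟩ | ⟨_, _⟩ | ⟨_, _⟩ <;> rcases hbz with ⟨_, _⟩ | ⟨_, _⟩ | ⟨_, _⟩ <;>
    rcases hcz with ⟨_, _⟩ | ⟨_, _⟩ | ⟨_, _⟩ <;> omega

lemma eq_or_eq_of_adj_of_ne {a b c d z : Hex} (ha : isB a) (hb : isB b) (hc : isB c)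
    (hd : isB d) (haz : HexGraph.Adj a z) (hbz : HexGraph.Adj b z) (hcz : HexGraph.Adj c z)
    (hdz : HexGraph.Adj d z) (hab : a ≠ b) (hcd : c ≠ d) :
    a = c ∨ a = d ∨ b = c ∨ b = d := by
  by_contra! h
  obtain ⟨hac, had, hbc, hbd⟩ := h
  rcases eq_or_eq_or_eq_of_adj ha hb hc hd haz hbz hcz hdz hab hac hbc with rfl | rfl | rfl
  exacts [had rfl, hbd rfl, hcd rfl]

end HexGraph

namespace List

variable {α : Type*}

def cycleEdges (l : List α) : List (α × α) := l.zip (l.rotate 1)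

@[simp]
lemma length_cycleEdges (l : List α) : l.cycleEdges.length = l.length := by
  simp [cycleEdges]

lemma getElem_cycleEdges (l : List α) {k : ℕ} (hk : k < l.cycleEdges.length) :
    l.cycleEdges[k] = (l[k]'(by simpa using hk),
      l[(k + 1) % l.length]'(Nat.mod_lt _ (by simp at hk; omega))) := by
  simp [cycleEdges, getElem_rotate]

lemma cycleEdges_rotate (l : List α) (k : ℕ) :
    (l.rotate k).cycleEdges = l.cycleEdges.rotate k := by
  rw [cycleEdges, cycleEdges, rotate_rotate, Nat.add_comm, ← rotate_rotate, zip,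
    zipWith_rotate_distrib _ _ _ _ (by simp)]

lemma cycleEdges_cons (a : α) (l : List α) : (a :: l).cycleEdges = (a :: l).zip (l ++ [a]) := by
  simp [cycleEdges]

lemma isChain_iff_forall_mem_zip_tail {R : α → α → Prop} {l : List α} :
    l.IsChain R ↔ ∀ p ∈ l.zip l.tail, R p.1 p.2 := by
  induction l with
  | nil => simp
  | cons a t ih =>
    cases t with
    | nil => simp
    | cons b t => simp_all [isChain_cons_cons]

lemma zip_append_take_one_tail (l : List α) :
    (l ++ l.take 1).zip (l ++ l.take 1).tail = l.cycleEdges := by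
  cases l with
  | nil => rfl
  | cons a t => rw [zip_eq_zip_take_min, cycleEdges_cons]; simp [take_of_length_le]

lemma isChain_append_take_one_iff {R : α → α → Prop} {l : List α} :
    (l ++ l.take 1).IsChain R ↔ ∀ p ∈ l.cycleEdges, R p.1 p.2 := by
  rw [isChain_iff_forall_mem_zip_tail, zip_append_take_one_tail]

lemma exists_rotate_eq_cons_cons_cons (l : List α) (hl : 3 ≤ l.length) (t : ℕ) :
    ∃ rest, l.rotate t = l[t % l.length]'(Nat.mod_lt _ (by omega)) ::
      l[(t + 1) % l.length]'(Nat.mod_lt _ (by omega)) ::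
      l[(t + 2) % l.length]'(Nat.mod_lt _ (by omega)) :: rest := by
  have hlen : 3 ≤ (l.rotate t).length := by simpa using hl
  obtain ⟨a, b, c, rest, h⟩ : ∃ a b c rest, l.rotate t = a :: b :: c :: rest :=
    match l.rotate t, hlen with
    | a :: b :: c :: rest, _ => ⟨a, b, c, rest, rfl⟩
  have hget (k : ℕ) (hk : k < 3) :
      (l.rotate t)[k] = l[(t + k) % l.length]'(Nat.mod_lt _ (by omega)) := by
    rw [getElem_rotate, add_comm]
  have h0 := hget 0 (by omega)
  have h1 := hget 1 (by omega)
  have h2 := hget 2 (by omega)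
  simp only [h, getElem_cons_zero, getElem_cons_succ, add_zero] at h0 h1 h2
  exact ⟨rest, by rw [h, h0, h1, h2]⟩

end List

open List

namespace IsLoopB

lemma badj_of_mem_cycleEdges {l : List Hex} (hl : IsLoopB l) {p : Hex × Hex}
    (hp : p ∈ l.cycleEdges) : Badj p.1 p.2 :=
  isChain_append_take_one_iff.1 hl.2.2.2 p hp

lemma rotate {l : List Hex} (hl : IsLoopB l) (k : ℕ) : IsLoopB (l.rotate k) := by
  refine ⟨fun y hy => hl.1 y (mem_rotate.1 hy), nodup_rotate.2 hl.2.1, by simpa using hl.2.2.1,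
    isChain_append_take_one_iff.2 fun p hp => ?_⟩
  rw [cycleEdges_rotate, mem_rotate] at hp
  exact hl.badj_of_mem_cycleEdges hp

lemma shortcut {a b c d z : Hex} {rest : List Hex} (hl : IsLoopB (a :: b :: c :: d :: rest))
    (ha : HexGraph.Adj a z) (hc : HexGraph.Adj c z) : IsLoopB (a :: c :: d :: rest) := by
  have hch (p) (hp) := hl.badj_of_mem_cycleEdges (p := p) hp
  obtain ⟨hB, hnd, -, -⟩ := hl
  have hac : Badj a c := by
    refine ⟨hB a (by simp), hB c (by simp), ?_, z, HexGraph.isA_of_adj (hB a (by simp)) ha, ha,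
      hc.symm⟩
    simp only [nodup_cons, mem_cons, not_or] at hnd
    exact hnd.1.2.1
  have hsub : a :: c :: d :: rest ⊆ a :: b :: c :: d :: rest := by
    intro y; simp only [mem_cons]; tauto
  refine ⟨fun y hy => hB y (hsub hy), hnd.sublist ((sublist_cons_self b _).cons_cons a), by simp,
    isChain_append_take_one_iff.2 ?_⟩
  simp only [cycleEdges_cons, cons_append, zip_cons_cons, mem_cons, forall_eq_or_imp] at hch ⊢
  exact ⟨hac, hch.2.2⟩

lemma isSLoop_of_forall_isLink {l : List Hex} (hl : IsLoopB l)
    (h : ∀ i j z (hij : i < j) (hj : j < l.cycleEdges.length),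
      IsLink l.cycleEdges[i] z → ¬ IsLink l.cycleEdges[j] z) : IsSLoop l := by
  have hlink (p : Hex × Hex) (hp : p ∈ l.cycleEdges) : IsLink p (Classical.epsilon (IsLink p)) :=
    Classical.epsilon_spec (hl.badj_of_mem_cycleEdges hp).2.2.2
  refine ⟨hl, l.cycleEdges.map fun p => Classical.epsilon (IsLink p), ?_, ?_⟩
  · rw [zip_append_take_one_tail, forall₂_map_right_iff, forall₂_same]
    exact hlink
  · rw [Nodup, pairwise_iff_getElem]
    intro i j hi hj hij heq
    simp only [getElem_map] at heq
    rw [length_map] at hj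
    exact h i j _ hij hj (hlink _ (getElem_mem _)) (heq ▸ hlink _ (getElem_mem _))

lemma exists_rotate_of_isLink {l : List Hex} (hl : IsLoopB l) {i j : ℕ} (hij : i < j)
    (hj : j < l.cycleEdges.length) {z : Hex} (hi_link : IsLink l.cycleEdges[i] z)
    (hj_link : IsLink l.cycleEdges[j] z) :
    ∃ k a b c rest, l.rotate k = a :: b :: c :: rest ∧
      HexGraph.Adj a z ∧ HexGraph.Adj b z ∧ HexGraph.Adj c z := by
  obtain ⟨hB, hnd, hlen, -⟩ := hl
  rw [length_cycleEdges] at hj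
  rw [getElem_cycleEdges] at hi_link hj_link
  obtain ⟨-, hiz, hzi⟩ := hi_link
  obtain ⟨-, hjz, hzj⟩ := hj_link
  have hmod (k : ℕ) (hk : k < l.length) : k % l.length = k := Nat.mod_eq_of_lt hk
  let y (k : ℕ) : Hex := l[k % l.length]'(Nat.mod_lt _ (by omega))
  suffices ∃ t, HexGraph.Adj (y t) z ∧ HexGraph.Adj (y (t + 1)) z ∧ HexGraph.Adj (y (t + 2)) z by
    obtain ⟨t, h0, h1, h2⟩ := this
    obtain ⟨rest, h⟩ := exists_rotate_eq_cons_cons_cons l hlen t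
    exact ⟨t, _, _, _, rest, h, h0, h1, h2⟩
  replace hiz : HexGraph.Adj (y i) z := by simpa [y, hmod i (by omega)] using hiz
  replace hjz : HexGraph.Adj (y j) z := by simpa [y, hmod j hj] using hjz
  change HexGraph.Adj z (y (i + 1)) at hzi
  change HexGraph.Adj z (y (j + 1)) at hzj
  have hyB (k : ℕ) : isB (y k) := hB _ (getElem_mem _)
  have hy_eq (a b : ℕ) : y a = y b ↔ a % l.length = b % l.length := hnd.getElem_inj_iff
  have hj_succ : (j + 1) % l.length = 0 ∧ j + 1 = l.length ∨ (j + 1) % l.length = j + 1 := by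
    rcases (show j + 1 ≤ l.length by omega).eq_or_lt with h | h
    · exact Or.inl ⟨by rw [h, Nat.mod_self], h⟩
    · exact Or.inr (hmod _ h)
  have hi_ne : y i ≠ y (i + 1) := by
    rw [ne_eq, hy_eq, hmod i (by omega), hmod (i + 1) (by omega)]; omega
  have hj_ne : y j ≠ y (j + 1) := by
    rw [ne_eq, hy_eq, hmod j hj]; omega
  have hshare := HexGraph.eq_or_eq_of_adj_of_ne (hyB i) (hyB (i + 1)) (hyB j) (hyB (j + 1))
    hiz hzi.symm hjz hzj.symm hi_ne hj_ne
  rw [hy_eq, hy_eq, hy_eq, hy_eq, hmod i (by omega), hmod j hj, hmod (i + 1) (by omega)]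
    at hshare
  -- the two edges meet either at `y j` or, across the wrap-around, at `y 0 = y l.length`
  obtain rfl | ⟨rfl, hjn⟩ : i + 1 = j ∨ i = 0 ∧ j + 1 = l.length := by omega
  · exact ⟨i, hiz, hzi.symm, hzj.symm⟩
  · have hy_wrap : y (j + 2) = y 1 := by
      rw [hy_eq, show j + 2 = 1 + l.length by omega, Nat.add_mod_right]
    exact ⟨j, hjz, hzj.symm, hy_wrap ▸ hzi.symm⟩

lemma not_exists_forall_adj_shortcut {a b c d z : Hex} {rest : List Hex}
    (hl : IsLoopB (a :: b :: c :: d :: rest)) (ha : HexGraph.Adj a z) (hb : HexGraph.Adj b z)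
    (hc : HexGraph.Adj c z) (hl_star : ¬ ∃ z', ∀ y ∈ a :: b :: c :: d :: rest, HexGraph.Adj y z') :
    ¬ ∃ z', ∀ y ∈ a :: c :: d :: rest, HexGraph.Adj y z' := by
  rintro ⟨z', hz'⟩
  obtain ⟨hB, hnd, -, -⟩ := hl
  have hac : a ≠ c := by
    simp only [nodup_cons, mem_cons, not_or] at hnd; exact hnd.1.2.1
  obtain rfl : z = z' := HexGraph.eq_of_adj_of_adj (hB a (by simp)) (hB c (by simp)) hac ha hc
    (hz' a (by simp)) (hz' c (by simp))
  refine hl_star ⟨z, fun y hy => ?_⟩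
  rw [mem_cons, mem_cons] at hy
  rcases hy with rfl | rfl | hy
  · exact ha
  · exact hb
  · exact hz' y (mem_cons_of_mem _ hy)

lemma exists_isSLoop_subset {l : List Hex} (hl : IsLoopB l)
    (hl_star : ¬ ∃ z, ∀ y ∈ l, HexGraph.Adj y z) : ∃ l', IsSLoop l' ∧ l' ⊆ l := by
  induction hn : l.length using Nat.strong_induction_on generalizing l with
  | _ n ih =>
  by_cases hcol : ∀ i j z (hij : i < j) (hj : j < l.cycleEdges.length),
      IsLink l.cycleEdges[i] z → ¬ IsLink l.cycleEdges[j] z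
  · exact ⟨l, hl.isSLoop_of_forall_isLink hcol, Subset.refl l⟩
  push Not at hcol
  obtain ⟨i, j, z, hij, hj, hi_link, hj_link⟩ := hcol
  obtain ⟨k, a, b, c, rest, hrot, ha, hb, hc⟩ := hl.exists_rotate_of_isLink hij hj hi_link hj_link
  have hmem (y : Hex) : y ∈ a :: b :: c :: rest ↔ y ∈ l := by rw [← hrot, mem_rotate]
  have hl_rot : IsLoopB (a :: b :: c :: rest) := hrot ▸ hl.rotate k
  have hl_rot_star : ¬ ∃ z', ∀ y ∈ a :: b :: c :: rest, HexGraph.Adj y z' := by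
    simpa only [hmem] using hl_star
  cases rest with
  | nil => exact absurd ⟨z, by simp [ha, hb, hc]⟩ hl_rot_star
  | cons d rest =>
    have hlen : (a :: c :: d :: rest).length < n := by
      rw [← hn, ← length_rotate l k, hrot]; simp
    obtain ⟨l', hs, hsub⟩ := ih _ hlen (hl_rot.shortcut ha hc)
      (hl_rot.not_exists_forall_adj_shortcut ha hb hc hl_rot_star) rfl
    refine ⟨l', hs, fun y hy => (hmem y).1 ?_⟩
    have := hsub hy
    simp only [mem_cons] at this ⊢
    tauto

lemma not_exists_forall_adj {l : List Hex} (hl : IsLoopB l) (hlen : 3 < l.length) :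
    ¬ ∃ z, ∀ y ∈ l, HexGraph.Adj y z := by
  rintro ⟨z, hz⟩
  obtain ⟨hB, hnd, -, -⟩ := hl
  match l, hlen, hnd, hB, hz with
  | a :: b :: c :: d :: _, _, hnd, hB, hz =>
    simp only [nodup_cons, mem_cons, not_or] at hnd
    rcases HexGraph.eq_or_eq_or_eq_of_adj (hB a (by simp)) (hB b (by simp)) (hB c (by simp))
      (hB d (by simp)) (hz a (by simp)) (hz b (by simp)) (hz c (by simp)) (hz d (by simp))
      hnd.1.1 hnd.1.2.1 hnd.2.1.1 with rfl | rfl | rfl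
    · exact hnd.1.2.2.1 rfl
    · exact hnd.2.1.2.1 rfl
    · exact hnd.2.2.1.1 rfl

end IsLoopB

/-- any simple cycle in `B` with more than three sites contains an s-loop. -/
theorem long_loop_contains_sloop (l : List Hex) (hl : IsLoopB l) (hlen : 3 < l.length) :
    ∃ l' : List Hex, IsSLoop l' ∧ ∀ x ∈ l', x ∈ l :=
  hl.exists_isSLoop_subset (hl.not_exists_forall_adj hlen)
end

section
/- An s-loop of constant spin sign in the triangular sublattice B at time 0 is stable: after the first update of sublattice A, its sites together with the intermediate A-sites form a constant-sign simple cycle in the hexagonal lattice, and hence the sign of every site of the s-loop is preserved for all later times of the alternating majority dynamics. -/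
open MeasureTheory

theorem majAt_eq_of_adj {σ : Hex → Bool} {s : Bool} {x u v : Hex} (huv : u ≠ v)
    (hu : HexGraph.Adj x u) (hv : HexGraph.Adj x v) (hsu : σ u = s) (hsv : σ v = s) :
    majAt σ x = s := by
  rcases eq_nbrsT_of_adj hu with rfl | rfl | rfl <;>
    rcases eq_nbrsT_of_adj hv with rfl | rfl | rfl <;>
    first
      | exact absurd rfl huv
      | (simp only [majAt]; cases s <;> simp_all)

theorem evolve_succ_eq_majAt_or_eq (σ0 : Hex → Bool) (n : ℕ) (x : Hex) :
    evolve σ0 (n + 1) x = majAt (evolve σ0 n) x ∨ evolve σ0 (n + 1) x = evolve σ0 n x := by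
  rw [evolve]
  split_ifs <;> simp only [updA, updB] <;> split_ifs <;> simp

theorem evolve_one_of_isA (σ0 : Hex → Bool) {x : Hex} (hx : isA x) :
    evolve σ0 1 x = majAt σ0 x := by
  simp_all [evolve, updA, isA]

theorem evolve_one_of_isB (σ0 : Hex → Bool) {x : Hex} (hx : isB x) :
    evolve σ0 1 x = σ0 x := by
  simp_all [evolve, updA, isB]

def HasMinDegreeTwo (C : Set Hex) : Prop :=
  ∀ x ∈ C, ∃ u ∈ C, ∃ v ∈ C, u ≠ v ∧ HexGraph.Adj x u ∧ HexGraph.Adj x v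

theorem HasMinDegreeTwo.evolve_eq_of_le {C : Set Hex} (hC : HasMinDegreeTwo C)
    {σ0 : Hex → Bool} {s : Bool} {m : ℕ} (hm : ∀ x ∈ C, evolve σ0 m x = s) {n : ℕ}
    (hmn : m ≤ n) :
    ∀ x ∈ C, evolve σ0 n x = s := by
  induction n, hmn using Nat.le_induction with
  | base => exact hm
  | succ n _ ih =>
    intro x hx
    obtain ⟨u, hu, v, hv, huv, hxu, hxv⟩ := hC x hx
    rcases evolve_succ_eq_majAt_or_eq σ0 n x with h | h <;> rw [h]
    · exact majAt_eq_of_adj huv hxu hxv (ih u hu) (ih v hv)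
    · exact ih x hx

theorem Nat.add_one_mod_ne_self {i k : ℕ} (hk : 2 ≤ k) (hi : i < k) : (i + 1) % k ≠ i := by
  rcases Nat.lt_or_ge (i + 1) k with h | h
  · rw [Nat.mod_eq_of_lt h]; omega
  · rw [show i + 1 = k by omega, Nat.mod_self]; omega

theorem Nat.exists_add_one_mod_eq {i k : ℕ} (hi : i < k) : ∃ j < k, (j + 1) % k = i := by
  rcases i with _ | i
  · exact ⟨k - 1, by omega, by rw [Nat.sub_add_cancel (by omega), Nat.mod_self]⟩
  · exact ⟨i, by omega, Nat.mod_eq_of_lt hi⟩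

theorem List.getElem_append_take_one {α : Type*} (l : List α) {i : ℕ} (hi : i ≤ l.length)
    (hl : 0 < l.length) :
    (l ++ l.take 1)[i]'(by simp; omega) = l[i % l.length]'(Nat.mod_lt _ hl) := by
  rcases hi.lt_or_eq with hi | rfl
  · simp [List.getElem_append_left hi, Nat.mod_eq_of_lt hi]
  · simp [List.getElem_append_right le_rfl, List.getElem_take]

theorem List.Forall₂.zip_tail_getElem {α β : Type*} {R : α × α → β → Prop} {L : List α}
    {zs : List β} (h : List.Forall₂ R (L.zip L.tail) zs) {i : ℕ} (hi : i + 1 < L.length) :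
    R (L[i], L[i + 1]) (zs[i]'(by rw [← h.length_eq]; simp; omega)) := by
  simpa [List.getElem_zip, List.getElem_tail] using
    (List.forall₂_iff_get.1 h).2 i (by simp; omega) (by rw [← h.length_eq]; simp; omega)

namespace SLoop

variable {l zs : List Hex}

theorem length_links (hzs : List.Forall₂ IsLink ((l ++ l.take 1).zip (l ++ l.take 1).tail) zs)
    (hl : 0 < l.length) : zs.length = l.length := by
  rw [← hzs.length_eq]; simp; omega

theorem isLink_getElem (hzs : List.Forall₂ IsLink ((l ++ l.take 1).zip (l ++ l.take 1).tail) zs)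
    (hl : 0 < l.length) {i : ℕ} (hi : i < l.length) :
    IsLink (l[i], l[(i + 1) % l.length]'(Nat.mod_lt _ hl))
      (zs[i]'(length_links hzs hl ▸ hi)) := by
  simpa only [List.getElem_append_take_one l hi.le hl, List.getElem_append_take_one l hi hl,
    Nat.mod_eq_of_lt hi] using hzs.zip_tail_getElem (i := i) (by simp; omega)

theorem exists_adj_of_mem_links
    (hzs : List.Forall₂ IsLink ((l ++ l.take 1).zip (l ++ l.take 1).tail) zs)
    (hl : l.Nodup) (hk : 2 ≤ l.length) {z : Hex} (hz : z ∈ zs) :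
    isA z ∧ ∃ y ∈ l, ∃ y' ∈ l, y ≠ y' ∧ HexGraph.Adj z y ∧ HexGraph.Adj z y' := by
  obtain ⟨i, hi, rfl⟩ := List.mem_iff_getElem.1 hz
  rw [length_links hzs (by omega)] at hi
  obtain ⟨hA, hy, hy'⟩ := isLink_getElem hzs (by omega) hi
  refine ⟨hA, _, List.getElem_mem _, _, List.getElem_mem _, ?_, hy.symm, hy'⟩
  rw [Ne, hl.getElem_inj_iff]
  exact (Nat.add_one_mod_ne_self hk hi).symm

theorem exists_adj_links_of_mem
    (hzs : List.Forall₂ IsLink ((l ++ l.take 1).zip (l ++ l.take 1).tail) zs)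
    (hnd : zs.Nodup) (hk : 2 ≤ l.length) {y : Hex} (hy : y ∈ l) :
    ∃ z ∈ zs, ∃ z' ∈ zs, z ≠ z' ∧ HexGraph.Adj y z ∧ HexGraph.Adj y z' := by
  obtain ⟨i, hi, rfl⟩ := List.mem_iff_getElem.1 hy
  obtain ⟨j, hj, rfl⟩ := Nat.exists_add_one_mod_eq hi
  obtain ⟨-, hz, -⟩ := isLink_getElem hzs (by omega) hi
  obtain ⟨-, -, hz'⟩ := isLink_getElem hzs (by omega) hj
  refine ⟨_, List.getElem_mem _, _, List.getElem_mem _, ?_, hz, hz'.symm⟩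
  rw [Ne, hnd.getElem_inj_iff]
  exact Nat.add_one_mod_ne_self hk hj

theorem hasMinDegreeTwo (hzs : List.Forall₂ IsLink ((l ++ l.take 1).zip (l ++ l.take 1).tail) zs)
    (hl : l.Nodup) (hk : 2 ≤ l.length) (hnd : zs.Nodup) :
    HasMinDegreeTwo {x | x ∈ l ∨ x ∈ zs} := by
  rintro x (hx | hx)
  · obtain ⟨z, hz, z', hz', hne, h, h'⟩ := exists_adj_links_of_mem hzs hnd hk hx
    exact ⟨z, .inr hz, z', .inr hz', hne, h, h'⟩
  · obtain ⟨-, y, hy, y', hy', hne, h, h'⟩ := exists_adj_of_mem_links hzs hl hk hx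
    exact ⟨y, .inl hy, y', .inl hy', hne, h, h'⟩

end SLoop

/-- an s-loop of constant sign at time 0 is stable: after the first update
the intermediate `A`-sites carry the same sign (forming a constant-sign cycle in `H`),
and every site of the s-loop keeps its sign forever. -/
theorem sloop_stable (σ0 : Hex → Bool) (s : Bool) (l zs : List Hex) (hl : IsLoopB l)
    (hzs : List.Forall₂ IsLink ((l ++ l.take 1).zip (l ++ l.take 1).tail) zs)
    (hnd : zs.Nodup) (hconst : ∀ y ∈ l, σ0 y = s) :
    (∀ z ∈ zs, evolve σ0 1 z = s) ∧ ∀ n : ℕ, ∀ y ∈ l, evolve σ0 n y = s := by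
  obtain ⟨hB, hnodup, hk, -⟩ := hl
  have hlinks : ∀ z ∈ zs, evolve σ0 1 z = s := fun z hz => by
    obtain ⟨hA, y, hy, y', hy', hne, h, h'⟩ :=
      SLoop.exists_adj_of_mem_links hzs hnodup (by omega) hz
    rw [evolve_one_of_isA σ0 hA]
    exact majAt_eq_of_adj hne h h' (hconst y hy) (hconst y' hy')
  have hsites : ∀ y ∈ l, evolve σ0 1 y = s := fun y hy => by
    rw [evolve_one_of_isB σ0 (hB y hy), hconst y hy]
  refine ⟨hlinks, fun n y hy => ?_⟩
  rcases n with _ | n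
  · exact hconst y hy
  · exact (SLoop.hasMinDegreeTwo hzs hnodup (by omega) hnd).evolve_eq_of_le (m := 1)
      (by rintro x (hx | hx); exacts [hsites x hx, hlinks x hx]) (by omega) y (.inl hy)
end

section
/- If (y_0,...,y_m) is an s-path in B of constant sign in the initial configuration sigma^0, and both partial clusters C_{(y_1,y_0)} and C_{(y_{m-1},y_m)} contain s-loops, then the s-path is stable: every y_i retains its initial sign in sigma^n for all n from 0 to infinity under the alternating majority dynamics. -/
open MeasureTheory

/-!
Call a site `y` of a set `S` well anchored if it has two distinct `A`-neighbours, each adjacent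
to a further site of `S`. A set of `B`-sites of sign `s` all of whose sites are well anchored
never changes: after an `A`-update each such `A`-neighbour sees two sites of sign `s` and takes
sign `s`, and after the next `B`-update every site of the set sees two of them.
Consecutive links of an s-path or an s-loop are distinct, so their interior sites are well
anchored. An endpoint of the s-path gets its second anchor from a path in its partial cluster
leading to the s-loop, once the stars along that path are shortcut; the first-step condition
in the definition of the partial cluster is what keeps the two anchors of the endpoint apart.
-/

theorem hexGraph_commonNeighbors_subsingleton {a b : Hex} (hab : a ≠ b) :
    (HexGraph.commonNeighbors a b).Subsingleton := by
  rintro ⟨z1, z2, z3⟩ hz ⟨w1, w2, w3⟩ hw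
  obtain ⟨a1, a2, a3⟩ := a
  obtain ⟨b1, b2, b3⟩ := b
  simp only [SimpleGraph.mem_commonNeighbors, HexGraph, SimpleGraph.fromRel_adj, hexRel, ne_eq,
    Prod.mk.injEq] at hz hw hab ⊢
  cases a3 <;> cases b3 <;> cases z3 <;> cases w3 <;> simp_all <;> omega

theorem Badj.symm {a b : Hex} (h : Badj a b) : Badj b a := by
  obtain ⟨ha, hb, hab, z, hz, haz, hzb⟩ := h
  exact ⟨hb, ha, hab.symm, z, hz, hzb.symm, haz.symm⟩

theorem mem_nbrsT {x a : Hex} (h : HexGraph.Adj x a) :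
    a = (nbrsT x).1 ∨ a = (nbrsT x).2.1 ∨ a = (nbrsT x).2.2 := by
  obtain ⟨i, j, c⟩ := x
  obtain ⟨d, e, f⟩ := a
  simp only [HexGraph, SimpleGraph.fromRel_adj, hexRel, Prod.mk.injEq] at h
  obtain ⟨-, ⟨hc, hf, h⟩ | ⟨hf, hc, h⟩⟩ := h <;> subst hc hf <;>
    simp only [nbrsT, Prod.mk.injEq] <;> rcases h with ⟨h1, h2⟩ | ⟨h1, h2⟩ | ⟨h1, h2⟩ <;> simp_all

theorem majAt_eq_of_adj_s9 {σ : Hex → Bool} {s : Bool} {x a b : Hex} (hab : a ≠ b)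
    (ha : HexGraph.Adj x a) (hb : HexGraph.Adj x b) (hsa : σ a = s) (hsb : σ b = s) :
    majAt σ x = s := by
  rcases mem_nbrsT ha with rfl | rfl | rfl <;> rcases mem_nbrsT hb with rfl | rfl | rfl <;>
    first
      | exact absurd rfl hab
      | (cases s <;> simp_all [majAt])

theorem evolve_two_mul_add_one (σ0 : Hex → Bool) (k : ℕ) :
    evolve σ0 (2 * k + 1) = updA (evolve σ0 (2 * k)) :=
  if_pos (by omega)

theorem evolve_two_mul_add_two (σ0 : Hex → Bool) (k : ℕ) :
    evolve σ0 (2 * k + 2) = updB (evolve σ0 (2 * k + 1)) :=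
  if_neg (by omega)

def IsAnchor (S : Set Hex) (y z : Hex) : Prop :=
  isA z ∧ HexGraph.Adj y z ∧ ∃ p ∈ S, p ≠ y ∧ HexGraph.Adj z p

def IsWellAnchored (S : Set Hex) (y : Hex) : Prop :=
  ∃ z₁ z₂, z₁ ≠ z₂ ∧ IsAnchor S y z₁ ∧ IsAnchor S y z₂

theorem evolve_eq_of_isWellAnchored {σ0 : Hex → Bool} {s : Bool} {S : Set Hex}
    (hB : ∀ y ∈ S, isB y) (hs : ∀ y ∈ S, σ0 y = s) (hS : ∀ y ∈ S, IsWellAnchored S y) :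
    ∀ n, ∀ y ∈ S, evolve σ0 n y = s := by
  have hodd : ∀ k, ∀ y ∈ S, evolve σ0 (2 * k + 1) y = evolve σ0 (2 * k) y := by
    intro k y hy
    rw [evolve_two_mul_add_one]
    exact if_neg (by simp [show y.2.2 = true from hB y hy])
  have heven : ∀ k, ∀ y ∈ S, evolve σ0 (2 * k) y = s := by
    intro k
    induction k with
    | zero => exact hs
    | succ k ih =>
      have hanchor : ∀ y ∈ S, ∀ z, IsAnchor S y z → evolve σ0 (2 * k + 1) z = s := by
        rintro y hy z ⟨hz, hyz, p, hp, hpy, hzp⟩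
        rw [evolve_two_mul_add_one]
        exact (if_pos hz).trans (majAt_eq_of_adj_s9 hpy.symm hyz.symm hzp (ih y hy) (ih p hp))
      intro y hy
      obtain ⟨z₁, z₂, hz, h₁, h₂⟩ := hS y hy
      rw [show 2 * (k + 1) = 2 * k + 2 by ring, evolve_two_mul_add_two]
      exact (if_pos (hB y hy)).trans
        (majAt_eq_of_adj_s9 hz h₁.2.1 h₂.2.1 (hanchor y hy _ h₁) (hanchor y hy _ h₂))
  intro n y hy
  obtain ⟨k, rfl | rfl⟩ := Nat.even_or_odd' n
  · exact heven k y hy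
  · rw [hodd k y hy]
    exact heven k y hy

theorem exists_infix_of_mem {α : Type*} {l : List α} {y : α} (h : y ∈ l) (a b : α) :
    ∃ c d, [c, y, d] <:+: a :: l ++ [b] := by
  obtain ⟨s, t, rfl⟩ := List.append_of_mem h
  obtain ⟨s', c, hs⟩ : ∃ s' c, a :: s = s' ++ [c] :=
    ⟨_, _, (List.dropLast_append_getLast (List.cons_ne_nil a s)).symm⟩
  obtain ⟨d, t', ht⟩ : ∃ d t', t ++ [b] = d :: t' := List.exists_cons_of_ne_nil (by simp)
  refine ⟨c, d, s', t', ?_⟩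
  rw [← List.cons_append, hs]
  simp only [List.append_assoc, List.cons_append, List.nil_append, ht]

theorem eq_head_or_eq_getLast_or_exists_infix {α : Type*} {l : List α} (h : 1 < l.length)
    {y : α} (hy : y ∈ l) :
    y = l[0] ∨ y = l[l.length - 1] ∨ ∃ c d, [c, y, d] <:+: l := by
  obtain ⟨a, m, rfl⟩ := List.exists_cons_of_ne_nil (List.ne_nil_of_length_pos (l := l) (by omega))
  obtain ⟨u, b, rfl⟩ : ∃ u b, m = u ++ [b] :=
    ⟨_, _, (List.dropLast_append_getLast (List.ne_nil_of_length_pos (by simp at h; omega))).symm⟩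
  simp only [List.mem_cons, List.mem_append, List.not_mem_nil, or_false] at hy
  rcases hy with rfl | hy | rfl
  · exact Or.inl rfl
  · exact Or.inr (Or.inr (exists_infix_of_mem hy a b))
  · exact Or.inr (Or.inl (by simp))

theorem zip_tail_append_pair {α : Type*} (L : List α) (x y : α) :
    (L ++ [x, y]).zip (L ++ [x, y]).tail = (L ++ [x]).zip (L ++ [x]).tail ++ [(x, y)] := by
  induction L with
  | nil => rfl
  | cons u L ih => cases L <;> simp_all

def HasCommonANbr (a b c : Hex) : Prop :=
  ∃ z, isA z ∧ HexGraph.Adj a z ∧ HexGraph.Adj b z ∧ HexGraph.Adj c z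

/-- On a path in `B`, three consecutive sites with a common `A`-neighbour form a star. -/
def StarFree (l : List Hex) : Prop :=
  ∀ a b c, [a, b, c] <:+: l → ¬ HasCommonANbr a b c

theorem isWellAnchored_of_badj {S : Set Hex} {a y b : Hex} (ha : a ∈ S) (hb : b ∈ S)
    (hay : Badj a y) (hyb : Badj y b) (h : ¬ HasCommonANbr a y b) : IsWellAnchored S y := by
  obtain ⟨-, -, hay, z₁, hz₁, haz₁, hz₁y⟩ := hay
  obtain ⟨-, -, hyb, z₂, hz₂, hyz₂, hz₂b⟩ := hyb
  refine ⟨z₁, z₂, ?_, ⟨hz₁, hz₁y.symm, a, ha, hay, haz₁.symm⟩, ⟨hz₂, hyz₂, b, hb, hyb.symm, hz₂b⟩⟩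
  rintro rfl
  exact h ⟨z₁, hz₁, haz₁, hz₁y.symm, hz₂b.symm⟩

theorem StarFree.isWellAnchored {S : Set Hex} {l : List Hex} (hsf : StarFree l)
    (hch : l.IsChain Badj) (hS : ∀ w ∈ l, w ∈ S) {a y b : Hex} (h : [a, y, b] <:+: l) :
    IsWellAnchored S y := by
  have hayb : [a, y, b].IsChain Badj := hch.infix h
  simp only [List.isChain_cons_cons, List.isChain_singleton, and_true] at hayb
  exact isWellAnchored_of_badj (hS a (h.subset (by simp))) (hS b (h.subset (by simp)))
    hayb.1 hayb.2 (hsf a y b h)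

theorem starFree_of_forall₂_isLink {l zs : List Hex} (hch : l.IsChain Badj)
    (hzs : List.Forall₂ IsLink (l.zip l.tail) zs) (hne : zs.IsChain (· ≠ ·)) : StarFree l := by
  rintro a b c ⟨s, t, rfl⟩ ⟨z, hz, ha, hb, hc⟩
  induction s generalizing zs with
  | nil =>
    rcases hzs with _ | ⟨⟨-, haz₁, hz₁b⟩, _ | ⟨⟨-, hbz₂, hz₂c⟩, -⟩⟩
    simp only [List.nil_append, List.cons_append, List.isChain_cons_cons] at hch hne
    have h₁ := hexGraph_commonNeighbors_subsingleton hch.1.2.2.1 ⟨ha, hb⟩ ⟨haz₁, hz₁b.symm⟩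
    have h₂ := hexGraph_commonNeighbors_subsingleton hch.2.1.2.2.1 ⟨hb, hc⟩ ⟨hbz₂, hz₂c.symm⟩
    exact hne.1 (h₁.symm.trans h₂)
  | cons d s ih =>
    obtain ⟨e, L, hL⟩ : ∃ e L, s ++ [a, b, c] ++ t = e :: L :=
      List.exists_cons_of_ne_nil (by simp)
    simp only [List.cons_append] at hch hzs
    rw [hL] at hch hzs ih
    rcases hzs with _ | ⟨-, hzs⟩
    exact ih hne.tail hch.tail hzs

theorem IsSLoop.isWellAnchored {S : Set Hex} {sl : List Hex} (h : IsSLoop sl)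
    (hS : ∀ w ∈ sl, w ∈ S) {y : Hex} (hy : y ∈ sl) : IsWellAnchored S y := by
  obtain ⟨⟨hB, hnd, hlen, hch⟩, zs, hzs, hznd⟩ := h
  obtain ⟨a, b, r, rfl⟩ : ∃ a b r, sl = a :: b :: r := by
    match sl, hlen with | a :: b :: r, _ => exact ⟨a, b, r, rfl⟩
  have hclosed : a :: b :: r ++ (a :: b :: r).take 1 = a :: b :: r ++ [a] := rfl
  rw [hclosed] at hch hzs
  obtain ⟨za, zs', hza, -, rfl⟩ := List.forall₂_cons_left_iff.1 hzs
  -- go once more around the first edge, so that `a` becomes an interior site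
  have hlinks : List.Forall₂ IsLink ((a :: b :: r ++ [a, b]).zip (a :: b :: r ++ [a, b]).tail)
      (za :: zs' ++ [za]) := by
    rw [zip_tail_append_pair]
    exact List.rel_append hzs (.cons hza .nil)
  have hchain : (a :: b :: r ++ [a, b]).IsChain Badj := by
    rw [show a :: b :: r ++ [a, b] = a :: b :: r ++ [a] ++ [b] by simp]
    refine hch.append (List.isChain_singleton b) fun x hx y hy => ?_
    rw [List.getLast?_concat, Option.mem_some_iff] at hx
    rw [List.head?_cons, Option.mem_some_iff] at hy
    exact hx ▸ hy ▸ (List.isChain_cons_cons.1 hch).1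
  have hne : (za :: zs' ++ [za]).IsChain (· ≠ ·) := by
    have hzs' : zs' ≠ [] := by
      rintro rfl
      simp at hzs
    refine List.IsChain.append (List.Pairwise.isChain hznd) (List.isChain_singleton za) ?_
    intro x hx y hy
    simp only [List.getLast?_cons, List.getLast?_eq_some_getLast hzs', Option.getD_some,
      List.head?_cons, Option.mem_some_iff] at hx hy
    subst hx hy
    exact fun h => (List.nodup_cons.1 hznd).1 (h ▸ List.getLast_mem hzs')
  obtain ⟨c, d, hinf⟩ := exists_infix_of_mem (show y ∈ b :: r ++ [a] by simp at hy ⊢; tauto) a b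
  refine (starFree_of_forall₂_isLink hchain hlinks hne).isWellAnchored hchain
    (fun w hw => hS w (by simp at hw ⊢; tauto)) (by simpa using hinf)

theorem IsSPath.isWellAnchored {S : Set Hex} {l : List Hex} (hsp : IsSPath l)
    (h2 : 1 < l.length) (hS : ∀ w ∈ l, w ∈ S) (h₀ : IsWellAnchored S l[0])
    (h₁ : IsWellAnchored S l[l.length - 1]) {y : Hex} (hy : y ∈ l) : IsWellAnchored S y := by
  obtain ⟨⟨-, hch, -⟩, zs, hzs, hznd⟩ := hsp
  rcases eq_head_or_eq_getLast_or_exists_infix h2 hy with rfl | rfl | ⟨c, d, hinf⟩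
  · exact h₀
  · exact h₁
  · exact (starFree_of_forall₂_isLink hch hzs hznd.isChain).isWellAnchored hch hS hinf

theorem not_hasCommonANbr_of_hasCommonANbr {x v b c : Hex} (hvc : v ≠ c)
    (hx : ¬ HasCommonANbr x v b) (hvbc : HasCommonANbr v b c) : ¬ HasCommonANbr x v c := by
  rintro ⟨z', -, hxz', hvz', hcz'⟩
  obtain ⟨z, hz, hvz, hbz, hcz⟩ := hvbc
  obtain rfl := hexGraph_commonNeighbors_subsingleton hvc ⟨hvz, hcz⟩ ⟨hvz', hcz'⟩
  exact hx ⟨z, hz, hxz', hvz, hbz⟩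

theorem IsPathB.shortcut_of_hasCommonANbr {s t : List Hex} {a b c : Hex}
    (hp : IsPathB (s ++ a :: b :: c :: t)) (habc : HasCommonANbr a b c) :
    IsPathB (s ++ a :: c :: t) := by
  obtain ⟨hB, hch, hnd⟩ := hp
  obtain ⟨z, hz, haz, -, hcz⟩ := habc
  have hsub : (s ++ a :: c :: t).Sublist (s ++ a :: b :: c :: t) := by simp
  have hac : a ≠ c := by
    simpa using hnd.sublist (show [a, c].Sublist (s ++ a :: b :: c :: t) by simp)
  refine ⟨fun y hy => hB y (hsub.subset hy), ?_, hnd.sublist hsub⟩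
  have hch' : List.IsChain Badj (s ++ a :: b :: c :: t) := hch
  show List.IsChain Badj (s ++ a :: c :: t)
  simp only [List.isChain_append_cons_cons, List.isChain_cons_cons] at hch' ⊢
  exact ⟨hch'.1, ⟨hB a (by simp), hB c (by simp), hac, z, hz, haz, hcz.symm⟩, hch'.2.2.2⟩

theorem exists_starFree_subpath {x v : Hex} (r : List Hex) (hp : IsPathB (v :: r))
    (hx : ∀ b ∈ r.head?, ¬ HasCommonANbr x v b) :
    ∃ r', r'.Sublist r ∧ IsPathB (v :: r') ∧ (v :: r').getLast? = (v :: r).getLast? ∧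
      StarFree (x :: v :: r') := by
  by_cases hsf : StarFree (x :: v :: r)
  · exact ⟨r, List.Sublist.refl r, hp, rfl, hsf⟩
  simp only [StarFree, not_forall, not_not] at hsf
  obtain ⟨a, b, c, ⟨s, t, hst⟩, habc⟩ := hsf
  -- A star at the front would contradict `hx`; otherwise delete the middle site of the star.
  -- `hx` passes to a new second site because distinct `B`-sites share at most one `A`-neighbour.
  rcases s with _ | ⟨_, _ | ⟨_, s⟩⟩
  · simp only [List.nil_append, List.cons_append, List.cons.injEq] at hst
    obtain ⟨rfl, rfl, rfl⟩ := hst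
    exact (hx c rfl habc).elim
  · simp only [List.cons_append, List.nil_append, List.cons.injEq] at hst
    obtain ⟨-, rfl, rfl⟩ := hst
    have hp' : IsPathB (a :: c :: t) := IsPathB.shortcut_of_hasCommonANbr (s := []) hp habc
    have hac : a ≠ c := by
      have := hp'.2.2
      simp only [List.nodup_cons, List.mem_cons, not_or] at this
      exact this.1.1
    obtain ⟨r', hsub, hp'', hlast, hsf'⟩ := exists_starFree_subpath (c :: t) hp'
      (fun c' hc' => by
        obtain rfl : c = c' := Option.some.inj hc'
        exact not_hasCommonANbr_of_hasCommonANbr hac (hx b rfl) habc)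
    exact ⟨r', hsub.trans (List.sublist_cons_self b _), hp'', by simpa using hlast, hsf'⟩
  · simp only [List.append_assoc, List.cons_append, List.nil_append, List.cons.injEq] at hst
    obtain ⟨-, -, rfl⟩ := hst
    obtain ⟨r', hsub, hp', hlast, hsf'⟩ := exists_starFree_subpath (s ++ a :: c :: t)
      (IsPathB.shortcut_of_hasCommonANbr (s := v :: s) hp habc) (by cases s <;> exact hx)
    exact ⟨r', hsub.trans (by simp), hp', by
      rw [hlast]; simp only [List.getLast?_cons, List.getLast?_append, Option.getD_some], hsf'⟩
termination_by r.length

theorem not_hasCommonANbr_of_not_isStar {x x' b : Hex} (hxx' : Badj x x') (hx'b : Badj x' b)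
    (hbx : b ≠ x) (hstar : ¬ IsStar x' b x) : ¬ HasCommonANbr x x' b := by
  rintro ⟨z, hz, hxz, hx'z, hbz⟩
  exact hstar ⟨hx'b, ⟨hx'b.2.1, hxx'.1, hbx, z, hz, hbz, hxz.symm⟩, hxx', z, hz, hx'z, hbz, hxz⟩

theorem exists_wellAnchored_of_partialCluster {σ : Hex → Bool} {x x' : Hex} (hxx' : Badj x x')
    {sl : List Hex} (hsl : IsSLoop sl) (hsub : ∀ w ∈ sl, w ∈ partialCluster σ x x') :
    ∃ T : Set Hex, x' ∈ T ∧ (∀ y ∈ T, isB y ∧ σ y = σ x') ∧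
      ∀ S, T ⊆ S → x ∈ S → ∀ y ∈ T, IsWellAnchored S y := by
  obtain ⟨w, hw⟩ := List.exists_mem_of_length_pos (l := sl) (by have := hsl.1.2.2.1; omega)
  obtain ⟨p, hp, hps, hhead, hlast, hstep⟩ := hsub w hw
  obtain ⟨r, rfl⟩ := List.head?_eq_some_iff.1 hhead
  have hx : ∀ b ∈ r.head?, ¬ HasCommonANbr x x' b := by
    intro b hb
    obtain ⟨t, rfl⟩ := List.head?_eq_some_iff.1 hb
    obtain ⟨hbx, hstar⟩ := hstep (by simp)
    exact not_hasCommonANbr_of_not_isStar hxx' (List.isChain_cons_cons.1 hp.2.1).1 hbx hstar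
  obtain ⟨r', hr', hpath, hlast', hsf⟩ := exists_starFree_subpath r hp hx
  refine ⟨{y | y ∈ x' :: r' ∨ y ∈ sl}, Or.inl (List.mem_cons_self ..), ?_, ?_⟩
  · rintro y (hy | hy)
    · exact ⟨hpath.1 y hy, hps y ((hr'.cons_cons x').subset hy)⟩
    · obtain ⟨q, -, hq, -, hqlast, -⟩ := hsub y hy
      exact ⟨hsl.1.1 y hy, hq y (List.mem_of_getLast? hqlast)⟩
  · intro S hTS hxS y hy
    have hslS : ∀ w ∈ sl, w ∈ S := fun w hw => hTS (Or.inr hw)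
    rcases hy with hy | hy
    · obtain ⟨u, hu⟩ := List.getLast?_eq_some_iff.1 (hlast'.trans hlast)
      rw [hu, List.mem_append, List.mem_singleton] at hy
      rcases hy with hy | rfl
      · obtain ⟨c, d, hinf⟩ := exists_infix_of_mem hy x w
        rw [List.cons_append, ← hu] at hinf
        refine hsf.isWellAnchored (List.isChain_cons_cons.2 ⟨hxx', hpath.2.1⟩) ?_ hinf
        intro v hv
        rcases List.mem_cons.1 hv with rfl | hv
        · exact hxS
        · exact hTS (Or.inl hv)
      · exact hsl.isWellAnchored hslS hw
    · exact hsl.isWellAnchored hslS hy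

/-- an s-path of constant initial sign whose two end partial clusters both
contain s-loops is stable: every site keeps its sign at all times. -/
theorem spath_stable (σ0 : Hex → Bool) (s : Bool) (l : List Hex) (hsp : IsSPath l)
    (h2 : 2 ≤ l.length) (hsign : ∀ y ∈ l, σ0 y = s)
    (hc1 : ∃ sl : List Hex, IsSLoop sl ∧
      ∀ w ∈ sl, w ∈ partialCluster σ0 (l.get ⟨1, by omega⟩) (l.get ⟨0, by omega⟩))
    (hc2 : ∃ sl : List Hex, IsSLoop sl ∧
      ∀ w ∈ sl, w ∈ partialCluster σ0 (l.get ⟨l.length - 2, by omega⟩)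
        (l.get ⟨l.length - 1, by omega⟩)) :
    ∀ n : ℕ, ∀ y ∈ l, evolve σ0 n y = s := by
  obtain ⟨sl₁, hsl₁, hsub₁⟩ := hc1
  obtain ⟨sl₂, hsl₂, hsub₂⟩ := hc2
  have hch : l.IsChain Badj := hsp.1.2.1
  obtain ⟨T₁, hT₁, hsign₁, hanch₁⟩ :=
    exists_wellAnchored_of_partialCluster (hch.getElem 0 (by omega)).symm hsl₁ hsub₁
  obtain ⟨T₂, hT₂, hsign₂, hanch₂⟩ := exists_wellAnchored_of_partialCluster
    (by simpa [show l.length - 2 + 1 = l.length - 1 by omega] using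
      hch.getElem (l.length - 2) (by omega)) hsl₂ hsub₂
  set S := {y | y ∈ l} ∪ T₁ ∪ T₂
  have hlS : ∀ y ∈ l, y ∈ S := fun y hy => Or.inl (Or.inl hy)
  have hT₁S := hanch₁ S (fun w hw => Or.inl (Or.inr hw)) (hlS _ (List.get_mem ..))
  have hT₂S := hanch₂ S (fun w hw => Or.inr hw) (hlS _ (List.get_mem ..))
  have hsignS : ∀ y ∈ S, isB y ∧ σ0 y = s := by
    rintro y ((hy | hy) | hy)
    · exact ⟨hsp.1.1 y hy, hsign y hy⟩
    · exact (hsign₁ y hy).imp_right (·.trans (hsign _ (List.get_mem ..)))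
    · exact (hsign₂ y hy).imp_right (·.trans (hsign _ (List.get_mem ..)))
  refine fun n y hy => evolve_eq_of_isWellAnchored (fun y hy => (hsignS y hy).1)
    (fun y hy => (hsignS y hy).2) ?_ n y (hlS y hy)
  rintro y ((hy | hy) | hy)
  · exact hsp.isWellAnchored h2 hlS (hT₁S _ hT₁) (hT₂S _ hT₂) hy
  · exact hT₁S y hy
  · exact hT₂S y hy
end

section
/- The triangular lattice B can be partitioned into pairwise disjoint antistars (triangles without a common A-neighbor). -/
open MeasureTheory

/-!
The `A`-site of cell `(k, l)` is adjacent to the `B`-sites `(k, l)`, `(k - 1, l)`, `(k, l - 1)`, so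
stars are the "downward" triangles of `B` and every "upward" triangle
`{p, p + (1, 0), p + (0, 1)}` is an antistar. The coordinate difference `i - j` takes the values
`d`, `d + 1`, `d - 1` on the three corners of the upward triangle at a corner `p` with difference
`d`, so the upward triangles whose corner has `d ≡ 0 [ZMOD 3]` cover every `B`-site exactly once.
-/

lemma hexGraph_adj_B_A_iff (a b k l : ℤ) :
    HexGraph.Adj (a, b, true) (k, l, false) ↔
      (a = k ∧ b = l) ∨ (a = k - 1 ∧ b = l) ∨ (a = k ∧ b = l - 1) := by
  simp [HexGraph, SimpleGraph.fromRel_adj, hexRel, Prod.ext_iff]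

lemma badj_of_adj_A (a b c d k l : ℤ) (hne : (a, b) ≠ (c, d))
    (h₁ : HexGraph.Adj (a, b, true) (k, l, false))
    (h₂ : HexGraph.Adj (c, d, true) (k, l, false)) :
    Badj (a, b, true) (c, d, true) :=
  ⟨rfl, rfl, by simpa [Prod.ext_iff] using hne, (k, l, false), rfl, h₁, h₂.symm⟩

def upTriangle (p : ℤ × ℤ) : Finset Hex :=
  {(p.1, p.2, true), (p.1 + 1, p.2, true), (p.1, p.2 + 1, true)}

lemma isAntistarSet_upTriangle (p : ℤ × ℤ) : IsAntistarSet (upTriangle p) := by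
  obtain ⟨i, j⟩ := p
  refine ⟨(i, j, true), (i + 1, j, true), (i, j + 1, true), rfl, ?_, ?_, ?_, ?_⟩
  · exact badj_of_adj_A i j (i + 1) j (i + 1) j (by simp)
      ((hexGraph_adj_B_A_iff ..).2 (by omega)) ((hexGraph_adj_B_A_iff ..).2 (by omega))
  · exact badj_of_adj_A (i + 1) j i (j + 1) (i + 1) (j + 1) (by simp)
      ((hexGraph_adj_B_A_iff ..).2 (by omega)) ((hexGraph_adj_B_A_iff ..).2 (by omega))
  · exact badj_of_adj_A i (j + 1) i j i (j + 1) (by simp)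
      ((hexGraph_adj_B_A_iff ..).2 (by omega)) ((hexGraph_adj_B_A_iff ..).2 (by omega))
  · rintro ⟨⟨k, l, s⟩, hs, h₁, h₂, h₃⟩
    obtain rfl : s = false := hs
    rw [hexGraph_adj_B_A_iff] at h₁ h₂ h₃
    omega

lemma mem_upTriangle_iff (i j : ℤ) (p : ℤ × ℤ) :
    ((i, j, true) : Hex) ∈ upTriangle p ↔
      (i = p.1 ∧ j = p.2) ∨ (i = p.1 + 1 ∧ j = p.2) ∨ (i = p.1 ∧ j = p.2 + 1) := by
  simp [upTriangle, Prod.ext_iff]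

lemma existsUnique_upTriangle_mem (i j : ℤ) :
    ∃! p : ℤ × ℤ, (p.1 - p.2) % 3 = 0 ∧ ((i, j, true) : Hex) ∈ upTriangle p := by
  simp only [mem_upTriangle_iff]
  obtain h | h | h : (i - j) % 3 = 0 ∨ (i - j) % 3 = 1 ∨ (i - j) % 3 = 2 := by omega
  on_goal 1 => refine ⟨(i, j), by omega, ?_⟩
  on_goal 2 => refine ⟨(i - 1, j), by omega, ?_⟩
  on_goal 3 => refine ⟨(i, j - 1), by omega, ?_⟩
  all_goals
    rintro ⟨k, l⟩ hkl
    simp only [Prod.mk.injEq] at hkl ⊢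
    omega

/-- the triangular sublattice `B` can be partitioned into pairwise disjoint
antistars. -/
theorem antistar_partition :
    ∃ Part : Set (Finset Hex), (∀ t ∈ Part, IsAntistarSet t) ∧
      ∀ v : Hex, isB v → ∃! t : Finset Hex, t ∈ Part ∧ v ∈ t := by
  refine ⟨upTriangle '' {p | (p.1 - p.2) % 3 = 0}, ?_, ?_⟩
  · rintro t ⟨p, -, rfl⟩
    exact isAntistarSet_upTriangle p
  · rintro ⟨i, j, s⟩ (rfl : s = true)
    obtain ⟨p, ⟨hp, hmem⟩, huniq⟩ := existsUnique_upTriangle_mem i j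
    refine ⟨upTriangle p, ⟨⟨p, hp, rfl⟩, hmem⟩, ?_⟩
    rintro t ⟨⟨q, hq, rfl⟩, hqmem⟩
    rw [huniq q ⟨hq, hqmem⟩]
end

section
/- The deterministic cellular automaton on the triangular lattice T in which a spin flips iff at least two of its three designated neighbor-pairs are monochromatic of the opposite sign is equivalent to the alternating-sublattice zero-temperature majority dynamics on an associated hexagonal lattice H' restricted to the sublattice B' = T at even times: for all m >= 0, the automaton state at time m equals the H'-dynamics state on B' at time 2m. -/
open MeasureTheory

def maj3 (x y z : Bool) : Bool := x && y || x && z || y && z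

theorem maj3_maj3_self (v a b c d e f : Bool) :
    maj3 (maj3 v a b) (maj3 c v d) (maj3 f e v) =
      cond (maj3 ((a == !v) && (b == !v)) ((c == !v) && (d == !v)) ((e == !v) && (f == !v)))
        (!v) v := by
  revert v a b c d e f
  decide

theorem evolve_two_mul_succ (σ0 : Hex → Bool) (m : ℕ) :
    evolve σ0 (2 * (m + 1)) = updB (updA (evolve σ0 (2 * m))) := by
  have hodd : (2 * m + 1) % 2 = 1 := by omega
  have heven : (2 * m + 1 + 1) % 2 ≠ 1 := by omega
  rw [show 2 * (m + 1) = 2 * m + 1 + 1 by ring, evolve, if_neg heven, evolve, if_pos hodd]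

/-- The three `A`-neighbours of a `B`-site `x` each see `x` together with one of its designated
pairs, so such a neighbour disagrees with `x` after the `A`-update iff that pair is
monochromatic of the opposite sign; `x` then takes the majority of these three. -/
theorem updB_updA_apply_B (σ : Hex → Bool) (p : ℤ × ℤ) :
    updB (updA σ) (p.1, p.2, true) = autoStep (fun q => σ (q.1, q.2, true)) p := by
  simp only [updB, updA, majAt, nbrsT, autoStep, if_true, add_sub_cancel_right]
  exact maj3_maj3_self _ _ _ _ _ _ _

/-- the cellular automaton on the triangular lattice equals the
alternating-sublattice hexagonal dynamics restricted to `B` at even times: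
the automaton state at time `m` equals the `H`-dynamics state on `B` at time `2m`. -/
theorem automaton_eq_hex_dynamics (τ0 : ℤ × ℤ → Bool) (σ0 : Hex → Bool)
    (hinit : ∀ p : ℤ × ℤ, σ0 (p.1, p.2, true) = τ0 p) :
    ∀ m : ℕ, ∀ p : ℤ × ℤ, autoEvolve τ0 m p = evolve σ0 (2 * m) (p.1, p.2, true) := by
  intro m
  induction m with
  | zero => exact fun p => (hinit p).symm
  | succ m ih =>
    intro p
    rw [evolve_two_mul_succ, updB_updA_apply_B, autoEvolve, funext ih]
end

section
/- Suppose rectangle R' = (-a'/2,a'/2) x (-b'/2,b'/2) with a' < a and b' >= b, and suppose at time 0 there is a vertical plus-crossing of R' in the scaled triangular sublattice delta*B by an s-path. Then for all sufficiently small delta, at time 1 of the alternating majority dynamics there is a vertical plus-crossing of R = (-a/2,a/2) x (-b/2,b/2) in the scaled hexagonal lattice delta*H. -/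
open MeasureTheory

/-! After the update of `A` the sites of the s-path are still plus (`B` is not updated), and the
common `A`-neighbor of two consecutive sites is plus because two of its three neighbors are.
Interleaving them gives a plus path of `H` with steps of length at most `δ`. Its points lie
within `2δ` horizontally of the interior of `R'`, hence in the strip `|x| < a/2` once
`4δ ≤ a - a'`; it starts on or above the top of `R` and ends on or below its bottom
(`b ≤ b'`). Since no step drops by `b > δ`, the last visit above the top before the first visit
below the bottom delimits a crossing of `R`. -/

lemma snd_mem_uIcc_of_mem_segment {u v w : ℝ × ℝ} (hw : w ∈ segment ℝ u v) :
    w.2 ∈ Set.uIcc u.2 v.2 :=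
  segment_eq_uIcc u.2 v.2 ▸ (Prod.segment_subset u v hw).2

lemma le_snd_or_le_snd_of_segment_inter {u v : ℝ × ℝ} {S : Set ℝ} {c : ℝ}
    (h : (segment ℝ u v ∩ S ×ˢ {c}).Nonempty) : c ≤ u.2 ∨ c ≤ v.2 := by
  obtain ⟨w, hw, -, rfl⟩ := h
  exact le_sup_iff.mp (snd_mem_uIcc_of_mem_segment hw).2

lemma snd_le_or_snd_le_of_segment_inter {u v : ℝ × ℝ} {S : Set ℝ} {c : ℝ}
    (h : (segment ℝ u v ∩ S ×ˢ {c}).Nonempty) : u.2 ≤ c ∨ v.2 ≤ c := by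
  obtain ⟨w, hw, -, rfl⟩ := h
  exact inf_le_iff.mp (snd_mem_uIcc_of_mem_segment hw).1

lemma segment_inter_horizontal_nonempty {u v : ℝ × ℝ} {lo hi c : ℝ}
    (hu : u.1 ∈ Set.Icc lo hi) (hv : v.1 ∈ Set.Icc lo hi) (hvc : v.2 ≤ c) (hcu : c ≤ u.2) :
    (segment ℝ u v ∩ Set.Icc lo hi ×ˢ {c}).Nonempty := by
  obtain ⟨w, hw, hwc⟩ := (convex_segment u v).isPreconnected.intermediate_value
    (right_mem_segment ℝ u v) (left_mem_segment ℝ u v) continuous_snd.continuousOn ⟨hvc, hcu⟩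
  have hstrip := ((convex_Icc lo hi).prod (convex_univ (𝕜 := ℝ) (E := ℝ))).segment_subset
    (Set.mk_mem_prod hu trivial) (Set.mk_mem_prod hv trivial) hw
  exact ⟨w, hw, ⟨hstrip.1, hwc⟩⟩

lemma abs_fst_sub_le_dist (p q : ℝ × ℝ) : |p.1 - q.1| ≤ dist p q :=
  (Real.dist_eq p.1 q.1).symm.le.trans (le_max_left _ _)

lemma snd_sub_le_dist (p q : ℝ × ℝ) : p.2 - q.2 ≤ dist p q :=
  (le_abs_self _).trans ((Real.dist_eq p.2 q.2).symm.le.trans (le_max_right _ _))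

lemma dist_le_mul_of_dist_succ_le {E : Type*} [PseudoMetricSpace E] {f : ℕ → E} {d : ℝ}
    {N j k : ℕ} (hstep : ∀ n < N, dist (f n) (f (n + 1)) ≤ d) (hjk : j ≤ k) (hk : k ≤ N) :
    dist (f j) (f k) ≤ (k - j : ℕ) * d := by
  calc dist (f j) (f k) ≤ ∑ _ ∈ Finset.Ico j k, d :=
        dist_le_Ico_sum_of_dist_le hjk fun _ hn => hstep _ (by omega)
    _ = (k - j : ℕ) * d := by simp

lemma exists_descending_window {y : ℕ → ℝ} {lo hi : ℝ} {s t : ℕ} (hst : s < t)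
    (hs : hi ≤ y s) (ht : y t ≤ lo) (hstep : ∀ k, s ≤ k → k < t → y k - y (k + 1) < hi - lo) :
    ∃ p n, s ≤ p ∧ 1 ≤ n ∧ p + n + 1 ≤ t ∧ hi ≤ y p ∧ y (p + n + 1) ≤ lo ∧
      ∀ i, 1 ≤ i → i ≤ n → y (p + i) ∈ Set.Ioo lo hi := by
  have hexit : ∃ q, s < q ∧ y q ≤ lo := ⟨t, hst, ht⟩
  set q := Nat.find hexit
  obtain ⟨hsq, hq⟩ : s < q ∧ y q ≤ lo := Nat.find_spec hexit
  have hqt : q ≤ t := Nat.find_min' hexit ⟨hst, ht⟩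
  have hq_first : ∀ k, s < k → k < q → lo < y k := fun k hsk hkq =>
    not_le.mp fun hk => Nat.find_min hexit hkq ⟨hsk, hk⟩
  set p := Nat.findGreatest (fun k => hi ≤ y k) (q - 1)
  have hsp : s ≤ p := Nat.le_findGreatest (by omega) hs
  have hp : hi ≤ y p := Nat.findGreatest_spec (P := fun k => hi ≤ y k) (by omega) hs
  have hpq : p < q := by have := Nat.findGreatest_le (P := fun k => hi ≤ y k) (q - 1); omega
  have hp_last : ∀ k, p < k → k < q → y k < hi := fun k hpk hkq =>
    not_le.mp (Nat.findGreatest_is_greatest hpk (by omega))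
  have hpq' : p + 1 ≠ q := by
    intro h
    have := hstep p hsp (by omega)
    rw [h] at this
    linarith
  refine ⟨p, q - p - 1, hsp, by omega, by omega, hp, by rwa [show p + (q - p - 1) + 1 = q by omega],
    fun i hi1 hin => ⟨hq_first _ (by omega) (by omega), hp_last _ (by omega) (by omega)⟩⟩

lemma latticeCrossing_of_descending_path {α : Type*} {Adj : α → α → Prop} {good : α → Prop}
    {e : α → ℝ × ℝ} {δ a b : ℝ} (g : ℕ → α) {s t : ℕ} (hst : s < t)
    (hadj : ∀ k, s ≤ k → k < t → Adj (g k) (g (k + 1)))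
    (hgood : ∀ k, s ≤ k → k ≤ t → good (g k))
    (hx : ∀ k, s ≤ k → k ≤ t → |(δ • e (g k)).1| < a / 2)
    (hstep : ∀ k, s ≤ k → k < t → (δ • e (g k)).2 - (δ • e (g (k + 1))).2 < b)
    (hs : b / 2 ≤ (δ • e (g s)).2) (ht : (δ • e (g t)).2 ≤ -b / 2) :
    LatticeCrossing Adj good e δ (rectR a b) (topSide a b) (bottomSide a b) := by
  obtain ⟨p, n, hsp, hn, hnt, hp, hpn, hmid⟩ :=
    exists_descending_window (y := fun k => (δ • e (g k)).2) hst hs ht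
      (fun k h1 h2 => by linarith [hstep k h1 h2])
  have hx' : ∀ i ≤ n + 1, (δ • e (g (p + i))).1 ∈ Set.Icc (-a / 2) (a / 2) := fun i hi => by
    have := abs_lt.mp (hx (p + i) (by omega) (by omega))
    exact ⟨by linarith, this.2.le⟩
  refine ⟨n, fun i => g (p + i), hn, fun i hi => hadj _ (by omega) (by omega),
    fun i hi => hgood _ (by omega) (by omega), fun i hi1 hin => ?_, ?_, ?_⟩
  · have := abs_lt.mp (hx (p + i) (by omega) (by omega))
    exact ⟨⟨by linarith, this.2⟩, by simpa [neg_div] using hmid i hi1 hin⟩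
  · exact segment_inter_horizontal_nonempty (hx' 0 (by omega)) (hx' 1 (by omega))
      (hmid 1 le_rfl hn).2.le hp
  · exact segment_inter_horizontal_nonempty (hx' n (by omega)) (hx' (n + 1) (by omega))
      (by simpa [neg_div, add_assoc] using hpn) (by simpa [neg_div] using (hmid n hn le_rfl).1.le)

lemma eq_nbrsT_of_hexRel {z y : Hex} (h : hexRel z y) :
    y = (nbrsT z).1 ∨ y = (nbrsT z).2.1 ∨ y = (nbrsT z).2.2 := by
  obtain ⟨z1, z2, z3⟩ := z
  obtain ⟨y1, y2, y3⟩ := y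
  obtain ⟨rfl, rfl, h⟩ := h
  simp only [Prod.mk.injEq] at h
  rcases h with ⟨rfl, rfl⟩ | ⟨rfl, rfl⟩ | ⟨rfl, rfl⟩ <;> simp [nbrsT]

lemma hexRel_of_adj_of_isB {y z : Hex} (hy : isB y) (h : HexGraph.Adj y z) : hexRel z y := by
  obtain ⟨-, h | h⟩ := (SimpleGraph.fromRel_adj _ _ _).mp h
  · exact absurd hy (by simp [isB, h.1])
  · exact h

lemma dist_embH_le_one_of_hexRel {z y : Hex} (h : hexRel z y) : dist (embH z) (embH y) ≤ 1 := by
  obtain ⟨z1, z2, z3⟩ := z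
  obtain rfl : z3 = false := h.1
  have h3 : Real.sqrt 3 ≤ 3 := by
    nlinarith [Real.sq_sqrt (show (0 : ℝ) ≤ 3 by norm_num), Real.sqrt_nonneg 3]
  have h3' : 0 ≤ Real.sqrt 3 := Real.sqrt_nonneg 3
  rcases eq_nbrsT_of_hexRel h with rfl | rfl | rfl <;>
    simp only [nbrsT, embH, embT, Prod.dist_eq, Real.dist_eq, max_le_iff, abs_le] <;>
    push_cast <;> refine ⟨⟨?_, ?_⟩, ?_, ?_⟩ <;> linarith

lemma dist_embH_le_one {u v : Hex} (h : HexGraph.Adj u v) : dist (embH u) (embH v) ≤ 1 := by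
  obtain ⟨-, h | h⟩ := (SimpleGraph.fromRel_adj _ _ _).mp h
  · exact dist_embH_le_one_of_hexRel h
  · exact dist_comm (embH u) _ ▸ dist_embH_le_one_of_hexRel h

lemma updA_of_isB (σ : Hex → Bool) {y : Hex} (hy : isB y) : updA σ y = σ y := by
  simp [updA, show y.2.2 = true from hy]

lemma updA_eq_true_of_two_plus {σ : Hex → Bool} {z y y' : Hex} (h : hexRel z y)
    (h' : hexRel z y') (hne : y ≠ y') (hs : σ y = true) (hs' : σ y' = true) :
    updA σ z = true := by
  rw [updA, if_pos h.1]
  rcases eq_nbrsT_of_hexRel h with rfl | rfl | rfl <;>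
    rcases eq_nbrsT_of_hexRel h' with rfl | rfl | rfl <;>
    first | exact absurd rfl hne | simp [majAt, hs, hs']

lemma badj_of_isSPath {m : ℕ} {f : ℕ → Hex}
    (h : IsSPath (List.ofFn fun i : Fin (m + 2) => f i)) : ∀ i ≤ m, Badj (f i) (f (i + 1)) :=
  fun i hi => List.isChain_ofFn.mp h.1.2.1 i (by omega)

/-- The odd sites of `g` are the common `A`-neighbors of consecutive `f i`; each has two plus
neighbors. -/
lemma exists_hexPath_of_badj {σ : Hex → Bool} {m : ℕ} {f : ℕ → Hex}
    (hB : ∀ i ≤ m, Badj (f i) (f (i + 1))) (hplus : ∀ i ≤ m + 1, σ (f i) = true) :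
    ∃ g : ℕ → Hex, (∀ i, g (2 * i) = f i) ∧
      (∀ k < 2 * m + 2, HexGraph.Adj (g k) (g (k + 1))) ∧
      ∀ k ≤ 2 * m + 2, updA σ (g k) = true := by
  have hfB : ∀ i ≤ m + 1, isB (f i) := fun i hi => by
    rcases Nat.lt_or_ge i (m + 1) with h | h
    · exact (hB i (by omega)).1
    · exact (show i = m + 1 by omega) ▸ (hB m le_rfl).2.1
  have hlink : ∀ i, ∃ z, i ≤ m → HexGraph.Adj (f i) z ∧ HexGraph.Adj z (f (i + 1)) := fun i => by
    by_cases hi : i ≤ m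
    · obtain ⟨z, -, h1, h2⟩ := (hB i hi).2.2.2
      exact ⟨z, fun _ => ⟨h1, h2⟩⟩
    · exact ⟨f i, fun h => absurd h hi⟩
  choose z hz using hlink
  let g : ℕ → Hex := fun k => if k % 2 = 0 then f (k / 2) else z (k / 2)
  have heven : ∀ i, g (2 * i) = f i := fun i => by simp [g]
  have hodd : ∀ i, g (2 * i + 1) = z i := fun i => by
    simp [g, Nat.add_mod, show (2 * i + 1) / 2 = i by omega]
  refine ⟨g, heven, fun k hk => ?_, fun k hk => ?_⟩
  · obtain ⟨i, rfl | rfl⟩ := Nat.even_or_odd' k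
    · rw [heven, hodd]; exact (hz i (by omega)).1
    · rw [hodd, show 2 * i + 1 + 1 = 2 * (i + 1) by ring, heven]; exact (hz i (by omega)).2
  · obtain ⟨i, rfl | rfl⟩ := Nat.even_or_odd' k
    · rw [heven, updA_of_isB σ (hfB i (by omega))]; exact hplus i (by omega)
    · obtain ⟨h1, h2⟩ := hz i (by omega)
      rw [hodd]
      exact updA_eq_true_of_two_plus (hexRel_of_adj_of_isB (hfB i (by omega)) h1)
        (hexRel_of_adj_of_isB (hfB (i + 1) (by omega)) h2.symm) (hB i (by omega)).2.2.1
        (hplus i (by omega)) (hplus (i + 1) (by omega))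

lemma abs_fst_lt_of_even_interior {p : ℕ → ℝ × ℝ} {m : ℕ} {d r : ℝ} (hm : 1 ≤ m)
    (hstep : ∀ k < 2 * m + 2, dist (p k) (p (k + 1)) ≤ d)
    (hin : ∀ i, 1 ≤ i → i ≤ m → |(p (2 * i)).1| < r) :
    ∀ k ≤ 2 * m + 2, |(p k).1| < r + 2 * d := by
  intro k hk
  have hd : 0 ≤ d := dist_nonneg.trans (hstep 0 (by omega))
  -- the nearest even interior index is at most two steps from `k`
  set i := min (max (k / 2) 1) m
  have hnear : dist (p (2 * i)) (p k) ≤ 2 * d := by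
    rcases le_total (2 * i) k with h | h
    · refine (dist_le_mul_of_dist_succ_le hstep h hk).trans ?_
      gcongr
      exact_mod_cast (show k - 2 * i ≤ 2 by omega)
    · rw [dist_comm]
      refine (dist_le_mul_of_dist_succ_le hstep h (by omega)).trans ?_
      gcongr
      exact_mod_cast (show 2 * i - k ≤ 2 by omega)
  linarith [abs_sub_abs_le_abs_sub (p k).1 (p (2 * i)).1, abs_fst_sub_le_dist (p k) (p (2 * i)),
    dist_comm (p k) (p (2 * i)), hin i (by omega) (by omega)]

lemma evolve_one (σ0 : Hex → Bool) : evolve σ0 1 = updA σ0 := by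
  simp [evolve]

theorem spath_crossing_persists_general (a b a' b' : ℝ) (haa : a' < a)
    (hb : 0 < b) (hbb : b ≤ b') :
    ∃ δ0 : ℝ, 0 < δ0 ∧ ∀ δ : ℝ, 0 < δ → δ < δ0 → ∀ σ0 : Hex → Bool,
      SPathVPlusCrossB σ0 δ a' b' → VPlusCrossHex (evolve σ0 1) δ a b := by
  refine ⟨min ((a - a') / 4) b, lt_min (by linarith) hb, ?_⟩
  rintro δ hδ hδ0 σ0 ⟨m, f, hm, hsp, hplus, hrect, htop, hbot⟩
  obtain ⟨g, hgf, hadj, hgood⟩ := exists_hexPath_of_badj (badj_of_isSPath hsp) hplus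
  set p : ℕ → ℝ × ℝ := fun k => δ • embH (g k)
  have hstep : ∀ k < 2 * m + 2, dist (p k) (p (k + 1)) ≤ δ := fun k hk => by
    simpa [p, dist_smul₀, abs_of_pos hδ] using
      mul_le_mul_of_nonneg_left (dist_embH_le_one (hadj k hk)) hδ.le
  have hx := abs_fst_lt_of_even_interior hm hstep fun i h1 h2 => by
    have := (hrect i h1 h2).1
    exact abs_lt.mpr ⟨by simpa [p, hgf, neg_div] using this.1, by simpa [p, hgf] using this.2⟩
  obtain ⟨i, hi, hpi⟩ : ∃ i ≤ 1, b / 2 ≤ (p (2 * i)).2 := by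
    rcases le_snd_or_le_snd_of_segment_inter htop with h | h
    · exact ⟨0, zero_le_one, by simp only [p, hgf]; linarith⟩
    · exact ⟨1, le_rfl, by simp only [p, hgf]; linarith⟩
  obtain ⟨j, hj, hj', hpj⟩ : ∃ j, m ≤ j ∧ j ≤ m + 1 ∧ (p (2 * j)).2 ≤ -b / 2 := by
    rcases snd_le_or_snd_le_of_segment_inter hbot with h | h
    · exact ⟨m, le_rfl, by omega, by simp only [p, hgf]; linarith⟩
    · exact ⟨m + 1, by omega, le_rfl, by simp only [p, hgf]; linarith⟩
  have hij : i < j := by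
    by_contra hji
    obtain rfl : i = j := by omega
    linarith
  rw [evolve_one]
  exact latticeCrossing_of_descending_path g (by omega : 2 * i < 2 * j)
    (fun k _ hk => hadj k (by omega)) (fun k _ hk => hgood k (by omega))
    (fun k _ hk => (hx k (by omega)).trans_le (by linarith [min_le_left ((a - a') / 4) b]))
    (fun k _ hk => (snd_sub_le_dist _ _).trans_lt
      ((hstep k (by omega)).trans_lt (hδ0.trans_le (min_le_right _ _)))) hpi hpj

/-- an s-path vertical plus-crossing of `R'` in `δ·B` at time 0 yields, for
all small `δ`, a vertical plus-crossing of `R` in `δ·H` at time 1. -/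
theorem spath_crossing_persists (a b a' b' : ℝ) (ha' : 0 < a') (haa : a' < a)
    (hb : 0 < b) (hbb : b ≤ b') :
    ∃ δ0 : ℝ, 0 < δ0 ∧ ∀ δ : ℝ, 0 < δ → δ < δ0 → ∀ σ0 : Hex → Bool,
      SPathVPlusCrossB σ0 δ a' b' → VPlusCrossHex (evolve σ0 1) δ a b :=
  spath_crossing_persists_general a b a' b' haa hb hbb
end
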